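/- arXiv:1308.0745 — 5 statements merged into one kernel-verified Lean document; each statement's English description precedes it below -/
import Mathlib

section
/- (Quadrangle Lemma) Let (X,Ξ) be a pre-Mazzocca-Melone set of split type d. Let L1, L2, L3, L4 be four (not necessarily pairwise distinct) singular lines such that L_i and L_{i+1} (indices mod 4, so L5 = L1) share a (not necessarily unique) point p_i, for i = 1,2,3,4, and suppose that p1 and p3 are not X-collinear. Then L1, L2, L3, L4 are contained in a unique common symp. -/
/-!
Formalization of definitions from "On the varieties of the second row of the
split Freudenthal-Tits Magic Square" by Schillewaert and Van Maldeghem.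

Points of the projective space `P(V)` are elements of `ℙ K V`; projective
subspaces are represented by linear subspaces (`Submodule K V`), so a projective
`k`-space corresponds to a submodule of linear dimension `k + 1`.
-/

open scoped LinearAlgebra.Projectivization
open Projectivization Module

namespace MMset

variable {K : Type*} [Field K] {V : Type*} [AddCommGroup V] [Module K V]

/-- The set of projective points lying in a linear subspace `W ≤ V`. -/
def projPts (W : Submodule K V) : Set (ℙ K V) := {x | x.rep ∈ W}

/-- The projective line through two points, as a linear subspace of `V`. -/
def lineThrough (x y : ℙ K V) : Submodule K V := Submodule.span K {x.rep, y.rep}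

/-- A subspace is singular (w.r.t. the point set `X`) if all its points belong to `X`. -/
def IsSingular (X : Set (ℙ K V)) (W : Submodule K V) : Prop := projPts W ⊆ X

/-- A singular line: a projective line (2-dimensional linear subspace) all of
whose points belong to `X`. -/
def IsSingularLine (X : Set (ℙ K V)) (W : Submodule K V) : Prop :=
  Module.finrank K ↥W = 2 ∧ projPts W ⊆ X

/-- Two points of `X` are `X`-collinear if they lie on a common singular line. -/
def XCollinear (X : Set (ℙ K V)) (x y : ℙ K V) : Prop :=
  x ∈ X ∧ y ∈ X ∧ ∃ L : Submodule K V, IsSingularLine X L ∧ x.rep ∈ L ∧ y.rep ∈ L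

/-- `S` is the point set of a non-singular split quadric in the subspace `W`:
there is a quadratic form `Q` on `W` which is non-singular (no nonzero singular
vector of the quadric lies in the radical of the polar form) and of maximal Witt
index (it admits a totally singular subspace of linear dimension `⌊dim W / 2⌋`),
whose projective zero locus is exactly `S`.  (For `dim W = d + 2` this is the
hyperbolic quadric if `d` is even and the parabolic quadric if `d` is odd.) -/
def IsSplitQuadric (W : Submodule K V) (S : Set (ℙ K V)) : Prop :=
  ∃ Q : QuadraticForm K ↥W,
    (∀ v : ↥W, Q v = 0 → (∀ w : ↥W, QuadraticMap.polar Q v w = 0) → v = 0) ∧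
    (∃ U : Submodule K ↥W, (∀ u ∈ U, Q u = 0) ∧
        Module.finrank K ↥U = Module.finrank K ↥W / 2) ∧
    S = {x : ℙ K V | ∃ h : x.rep ∈ W, Q ⟨x.rep, h⟩ = 0}

/-- The (projective) tangent set at `x` to the quadric `X ∩ ξ`: the points `y` of `ξ`
such that `y = x`, or the line `⟨x,y⟩` meets `X` only in `x`, or the line `⟨x,y⟩`
is entirely contained in `X`. -/
def tangentSet (X : Set (ℙ K V)) (ξ : Submodule K V) (x : ℙ K V) : Set (ℙ K V) :=
  {y | y.rep ∈ ξ ∧ (y = x ∨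
     (∀ z : ℙ K V, z.rep ∈ lineThrough x y → z ∈ X → z = x) ∨
     projPts (lineThrough x y) ⊆ X)}

/-- The tangent space `T_x(ξ)`, as a linear subspace of `V`. -/
def tangentSub (X : Set (ℙ K V)) (ξ : Submodule K V) (x : ℙ K V) : Submodule K V :=
  Submodule.span K (Projectivization.rep '' tangentSet X ξ x)

/-- The space `T_x` generated by all the tangent spaces `T_x(ξ)`, `x ∈ ξ ∈ Ξ`. -/
def Tspace (X : Set (ℙ K V)) (Xi : Set (Submodule K V)) (x : ℙ K V) : Submodule K V :=
  Submodule.span K (Projectivization.rep '' ⋃ ξ ∈ {ξ ∈ Xi | x.rep ∈ ξ}, tangentSet X ξ x)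

/-- A pre-Mazzocca-Melone set of split type `d` with ambient (sub)space `W`:
`X` spans `W`, every `ξ ∈ Ξ` is a `(d+1)`-dimensional projective subspace of `W`
meeting `X` in a non-singular split quadric (a symp), and axioms (MM1) and (MM2)
hold. -/
structure IsPreMM (d : ℕ) (W : Submodule K V) (X : Set (ℙ K V))
    (Xi : Set (Submodule K V)) : Prop where
  spans : Submodule.span K (Projectivization.rep '' X) = W
  xi_le : ∀ ξ ∈ Xi, ξ ≤ W
  xi_rank : ∀ ξ ∈ Xi, Module.finrank K ↥ξ = d + 2
  xi_quadric : ∀ ξ ∈ Xi, IsSplitQuadric ξ (X ∩ projPts ξ)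
  mm1 : ∀ x ∈ X, ∀ y ∈ X, ∃ ξ ∈ Xi, x.rep ∈ ξ ∧ y.rep ∈ ξ
  mm2 : ∀ ξ₁ ∈ Xi, ∀ ξ₂ ∈ Xi, ξ₁ ≠ ξ₂ → projPts (ξ₁ ⊓ ξ₂) ⊆ X

/-- A Mazzocca-Melone set of split type `d`: a pre-Mazzocca-Melone set which
moreover satisfies (MM3): for every `x ∈ X` the space `T_x` has projective
dimension at most `2d` (i.e. linear dimension at most `2d + 1`). -/
structure IsMM (d : ℕ) (W : Submodule K V) (X : Set (ℙ K V))
    (Xi : Set (Submodule K V)) extends IsPreMM d W X Xi : Prop where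
  mm3 : ∀ x ∈ X, Module.rank K ↥(Tspace X Xi x) ≤ (2 * d + 1 : ℕ)

/-- The point set `X_p` of the residue at `p`, w.r.t. a hyperplane `C` of `T_p` not
containing `p`: the points of `C` lying on a singular line of `X` through `p`. -/
def residuePts (X : Set (ℙ K V)) (p : ℙ K V) (C : Submodule K V) : Set (ℙ K V) :=
  {y | y.rep ∈ C ∧ IsSingularLine X (lineThrough p y)}

/-- The family `Ξ_p` of the residue at `p`: the subspaces `C ∩ T_p(ξ)`, `p ∈ ξ ∈ Ξ`. -/
def residueXi (X : Set (ℙ K V)) (Xi : Set (Submodule K V)) (p : ℙ K V)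
    (C : Submodule K V) : Set (Submodule K V) :=
  {W | ∃ ξ ∈ Xi, p.rep ∈ ξ ∧ W = C ⊓ tangentSub X ξ p}

/-- The point set `X ⊆ ℙ(V)` is projectively equivalent to `Y ⊆ ℙ(V')`: there is a
linear map `V → V'` injective on the span of `X` carrying `X` exactly onto `Y`. -/
def ProjEquivalent {V' : Type*} [AddCommGroup V'] [Module K V']
    (X : Set (ℙ K V)) (Y : Set (ℙ K V')) : Prop :=
  ∃ f : V →ₗ[K] V',
    Set.InjOn f (Submodule.span K (Projectivization.rep '' X) : Submodule K V) ∧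
    Y = {q : ℙ K V' | ∃ x ∈ X, ∃ hq : f x.rep ≠ 0, q = Projectivization.mk K (f x.rep) hq}

end MMset

namespace MMset

variable (K : Type*) [Field K]

/-- The quadric Veronese variety `𝒱₂(K) ⊆ ℙ⁵(K)`: the image of `ℙ²(K)` under the
Veronese map. -/
noncomputable def veroneseVariety : Set (ℙ K (Fin 6 → K)) :=
  {p | ∃ (x : Fin 3 → K) (c : K),
    p.rep = c • ![x 0 * x 0, x 1 * x 1, x 2 * x 2, x 0 * x 1, x 0 * x 2, x 1 * x 2]}

/-- The Segre variety `𝒮_{k,ℓ}(K) ⊆ ℙ^{kℓ+k+ℓ}(K)`: the image of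
`ℙ^k(K) × ℙ^ℓ(K)` under the Segre map. -/
noncomputable def segreVariety (k l : ℕ) : Set (ℙ K (Fin (k + 1) × Fin (l + 1) → K)) :=
  {p | ∃ (x : Fin (k + 1) → K) (y : Fin (l + 1) → K) (c : K),
    p.rep = c • fun ij => x ij.1 * y ij.2}

/-- The line Grassmannian variety `𝒢_{m,1}(K) ⊆ ℙ^{(m²+m-2)/2}(K)`: the image of
the set of lines of `ℙ^m(K)` under the Plücker map. -/
noncomputable def grassmannVariety (m : ℕ) :
    Set (ℙ K ({ij : Fin (m + 1) × Fin (m + 1) // ij.1 < ij.2} → K)) :=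
  {p | ∃ (x y : Fin (m + 1) → K) (c : K),
    p.rep = c • fun ij => x ij.1.1 * y ij.1.2 - x ij.1.2 * y ij.1.1}

/-- The standard hyperbolic quadratic form `x₀x₁ + ⋯ + x_{2m-2}x_{2m-1}` on `K^{2m}`. -/
def hypForm (m : ℕ) (x : Fin (2 * m) → K) : K :=
  ∑ i : Fin m, x ⟨2 * i.1, by omega⟩ * x ⟨2 * i.1 + 1, by omega⟩

/-- The hyperbolic quadric in `ℙ^{2m-1}(K)` (the variety `𝒟_{m,1}(K)`). -/
noncomputable def hypQuadric (m : ℕ) : Set (ℙ K (Fin (2 * m) → K)) :=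
  {p | hypForm K m p.rep = 0}

/-- The standard parabolic quadratic form `x₀² + x₁x₂ + ⋯ + x_{2m-1}x_{2m}` on
`K^{2m+1}`. -/
def parForm (m : ℕ) (x : Fin (2 * m + 1) → K) : K :=
  x 0 * x 0 + ∑ i : Fin m, x ⟨2 * i.1 + 1, by omega⟩ * x ⟨2 * i.1 + 2, by omega⟩

/-- The parabolic quadric in `ℙ^{2m}(K)` (the variety `ℬ_{m,1}(K)`). -/
noncomputable def parQuadric (m : ℕ) : Set (ℙ K (Fin (2 * m + 1) → K)) :=
  {p | parForm K m p.rep = 0}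

/-- The half-spinor space of `D_n`: the even part `⋀^{even} U_∞` of the exterior
algebra of an `n`-dimensional space `U_∞` (a maximal singular subspace of the
hyperbolic quadric in `ℙ^{2n-1}(K)`). -/
noncomputable def halfSpinorSpace (n : ℕ) : Submodule K (ExteriorAlgebra K (Fin n → K)) :=
  ⨆ i : ℕ, ⋀[K]^(2 * i) (Fin n → K)

/-- The Clifford action `φ_u`, for `u = (u₀, u_∞) ∈ U₀ ⊕ U_∞` (with `U₀ ≅ (U_∞)^*`),
on the spinor space `⋀ U_∞`: contraction by `u₀` plus (left) wedge multiplication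
by `u_∞`. -/
noncomputable def cliffordAction {n : ℕ} (u : Module.Dual K (Fin n → K) × (Fin n → K))
    (s : ExteriorAlgebra K (Fin n → K)) : ExteriorAlgebra K (Fin n → K) :=
  CliffordAlgebra.contractLeft (Q := (0 : QuadraticForm K (Fin n → K))) u.1 s +
    ExteriorAlgebra.ι K u.2 * s

/-- The annihilator of a spinor `s`: the subspace of `U₀ ⊕ U_∞ ≅ K^{2n}` consisting
of all `u` with `φ_u(s) = 0`; it is always a singular subspace for the hyperbolic
form `q(u₀, u_∞) = u₀(u_∞)` on `U₀ ⊕ U_∞`. -/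
noncomputable def spinorAnnihilator {n : ℕ} (s : ExteriorAlgebra K (Fin n → K)) :
    Submodule K (Module.Dual K (Fin n → K) × (Fin n → K)) where
  carrier := {u | cliffordAction K u s = 0}
  add_mem' := by
    intro a b ha hb
    simp only [Set.mem_setOf_eq, cliffordAction] at *
    rw [Prod.fst_add, Prod.snd_add, map_add, map_add, LinearMap.add_apply, add_mul]
    rw [show ∀ x y z w : ExteriorAlgebra K (Fin n → K),
      x + y + (z + w) = (x + z) + (y + w) from by intros; abel]
    rw [ha, hb, add_zero]
  zero_mem' := by
    simp [cliffordAction]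
  smul_mem' := by
    intro c a ha
    simp only [Set.mem_setOf_eq, cliffordAction] at *
    rw [Prod.smul_fst, Prod.smul_snd, map_smul, map_smul, LinearMap.smul_apply, smul_mul_assoc,
      ← smul_add, ha, smul_zero]

/-- The half-spin variety `𝒟_{n,n}(K) ⊆ ℙ^{2^{n-1}-1}(K)`: the points of the
half-spinor space represented by pure spinors, i.e. spinors `s_U` whose annihilator
is a maximal singular subspace `U` (of linear dimension `n`) of the hyperbolic
quadric on `K^{2n}`. -/
noncomputable def halfSpinVariety (n : ℕ) : Set (ℙ K ↥(halfSpinorSpace K n)) :=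
  {p | Module.finrank K
        ↥(spinorAnnihilator K ((p.rep : ExteriorAlgebra K (Fin n → K)))) = n}

/-- The cubic form `d(x) = det x⁽¹⁾ + det x⁽²⁾ + det x⁽³⁾ − Tr(x⁽¹⁾x⁽²⁾x⁽³⁾)` on the
`27`-dimensional space of triples of `3×3` matrices (over any commutative ring). -/
def e6CubicForm {R : Type*} [CommRing R] (x : Fin 3 → Matrix (Fin 3) (Fin 3) R) : R :=
  (x 0).det + (x 1).det + (x 2).det - (x 0 * x 1 * x 2).trace

/-- The derivative `∂_x d(y)` of the cubic form `d` at `x`: the coefficient of `t`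
in the expansion of `d(x + t·y)`. -/
noncomputable def e6Deriv (x y : Fin 3 → Matrix (Fin 3) (Fin 3) K) : K :=
  (e6CubicForm (fun i =>
    (x i).map Polynomial.C + (Polynomial.X : Polynomial K) • (y i).map Polynomial.C)).coeff 1

/-- The variety `ℰ_{6,1}(K) ⊆ ℙ^{26}(K)`: the points `⟨x⟩` with `x^♯ = 0`, where the
adjoint square `x^♯` is defined by `∂_x d(y) = Tr(x^♯ y)`; since the trace pairing is
non-degenerate, `x^♯ = 0` holds if and only if `∂_x d(y) = 0` for all `y`. -/
noncomputable def e6Variety : Set (ℙ K (Fin 3 → Matrix (Fin 3) (Fin 3) K)) :=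
  {p | ∀ y, e6Deriv K p.rep y = 0}

end MMset

namespace MMset

open scoped LinearAlgebra.Projectivization



section QuadrangleAux

variable {K : Type*} [Field K] {V : Type*} [AddCommGroup V] [Module K V]

lemma exists_unit_smul_rep_mk (w : V) (h : w ≠ 0) :
    ∃ κ : Kˣ, (κ : K) • w = (Projectivization.mk K w h).rep := by
  have h2 := Projectivization.mk_rep (Projectivization.mk K w h)
  rw [Projectivization.mk_eq_mk_iff] at h2
  exact h2

lemma indep_of_ne (x y : ℙ K V) (hxy : x ≠ y) : LinearIndependent K ![x.rep, y.rep] := by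
  rw [linearIndependent_fin2]
  refine ⟨by simpa using y.rep_nonzero, ?_⟩
  intro a ha
  simp only [Matrix.cons_val_one, Matrix.head_cons, Matrix.cons_val_zero] at ha
  have ha0 : a ≠ 0 := by
    rintro rfl
    rw [zero_smul] at ha
    exact x.rep_nonzero ha.symm
  apply hxy
  have : Projectivization.mk K x.rep x.rep_nonzero = Projectivization.mk K y.rep y.rep_nonzero :=
    (Projectivization.mk_eq_mk_iff K _ _ _ _).mpr ⟨Units.mk0 a ha0, ha⟩
  rwa [Projectivization.mk_rep, Projectivization.mk_rep] at this

lemma rep_sub_ne_zero (x y : ℙ K V) (hxy : x ≠ y) : x.rep - y.rep ≠ 0 := by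
  have h := (linearIndependent_fin2.mp (indep_of_ne x y hxy)).2 1
  simp only [Matrix.cons_val_one, Matrix.head_cons, Matrix.cons_val_zero, one_smul] at h
  intro hs
  exact h (sub_eq_zero.mp hs).symm

lemma rep_add_ne_zero (x y : ℙ K V) (hxy : x ≠ y) : x.rep + y.rep ≠ 0 := by
  have h := (linearIndependent_fin2.mp (indep_of_ne x y hxy)).2 (-1)
  simp only [Matrix.cons_val_one, Matrix.head_cons, Matrix.cons_val_zero] at h
  intro hs
  apply h
  rw [neg_one_smul]
  exact neg_eq_of_add_eq_zero_left hs

lemma finrank_span_pair_eq_two {w w' : V} (h : LinearIndependent K ![w, w']) :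
    Module.finrank K ↥(Submodule.span K {w, w'}) = 2 := by
  have hr : Set.range ![w, w'] = {w, w'} := by
    ext z
    simp [Fin.exists_fin_two, or_comm]
  have := finrank_span_eq_card h
  rw [hr] at this
  simpa using this

lemma line_eq_span {X : Set (ℙ K V)} {M : Submodule K V} (hM : IsSingularLine X M)
    {x y : ℙ K V} (hxy : x ≠ y) (hx : x.rep ∈ M) (hy : y.rep ∈ M) :
    M = Submodule.span K {x.rep, y.rep} := by
  have : FiniteDimensional K ↥M := FiniteDimensional.of_finrank_pos (by rw [hM.1]; norm_num)
  refine (Submodule.eq_of_le_of_finrank_le ?_ ?_).symm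
  · exact Submodule.span_le.mpr (Set.insert_subset_iff.mpr ⟨hx, Set.singleton_subset_iff.mpr hy⟩)
  · rw [hM.1, finrank_span_pair_eq_two (indep_of_ne x y hxy)]

lemma quadratic_map_add (Q : QuadraticForm K V) (u v : V) :
    Q (u + v) = QuadraticMap.polar (⇑Q) u v + Q u + Q v := by
  rw [QuadraticMap.polar]; ring

end QuadrangleAux

/-- **The Quadrangle Lemma.** Let `(X, Ξ)` be a pre-Mazzocca-Melone set of split
type `d`, and let `L 0, L 1, L 2, L 3` be four (not necessarily pairwise distinct)
singular lines such that `L i` and `L (i+1)` (indices mod `4`) share the point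
`p i`, and suppose `p 0` and `p 2` are not `X`-collinear.  Then `L 0, L 1, L 2, L 3`
are contained in a unique common symp. -/
theorem quadrangle_lemma {K : Type*} [Field K] {V : Type*} [AddCommGroup V] [Module K V]
    (d : ℕ) (hd : 1 ≤ d) (X : Set (ℙ K V)) (Xi : Set (Submodule K V))
    (h : IsPreMM d ⊤ X Xi)
    (L : Fin 4 → Submodule K V) (hL : ∀ i, IsSingularLine X (L i))
    (p : Fin 4 → ℙ K V)
    (hp : ∀ i, (p i).rep ∈ L i ∧ (p i).rep ∈ L (i + 1))
    (h02 : ¬ XCollinear X (p 0) (p 2)) :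
    ∃! ξ : Submodule K V, ξ ∈ Xi ∧ L 0 ≤ ξ ∧ L 1 ≤ ξ ∧ L 2 ≤ ξ ∧ L 3 ≤ ξ := by
  classical
  have hX : ∀ i, projPts (L i) ⊆ X := fun i => (hL i).2
  have ha0 : (p 0).rep ∈ L 0 := (hp 0).1
  have ha1 : (p 0).rep ∈ L 1 := (hp 0).2
  have hb1 : (p 1).rep ∈ L 1 := (hp 1).1
  have hb2 : (p 1).rep ∈ L 2 := (hp 1).2
  have hc2 : (p 2).rep ∈ L 2 := (hp 2).1
  have hc3 : (p 2).rep ∈ L 3 := (hp 2).2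
  have he3 : (p 3).rep ∈ L 3 := (hp 3).1
  have he0 : (p 3).rep ∈ L 0 := (hp 3).2
  have hp0X : p 0 ∈ X := hX 0 ha0
  have hp2X : p 2 ∈ X := hX 2 hc2
  have hcol : ∀ i : Fin 4, (p 0).rep ∈ L i → (p 2).rep ∈ L i → False := fun i h1 h2 =>
    h02 ⟨hp0X, hp2X, L i, hL i, h1, h2⟩
  have h01 : p 0 ≠ p 1 := fun hh => hcol 2 (by rw [hh]; exact hb2) hc2
  have h12 : p 1 ≠ p 2 := fun hh => hcol 1 ha1 (by rw [← hh]; exact hb1)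
  have h23 : p 2 ≠ p 3 := fun hh => hcol 0 ha0 (by rw [hh]; exact he0)
  have h30 : p 3 ≠ p 0 := fun hh => hcol 3 (by rw [← hh]; exact he3) hc3
  have h02ne : p 0 ≠ p 2 := fun hh => hcol 0 ha0 (by rw [← hh]; exact ha0)
  obtain ⟨ξ, hξXi, haξ, hcξ⟩ := h.mm1 (p 0) hp0X (p 2) hp2X
  obtain ⟨Q, -, -, hset⟩ := h.xi_quadric ξ hξXi
  have hQ0 : Q ⟨(p 0).rep, haξ⟩ = 0 := by
    have hm : p 0 ∈ X ∩ projPts ξ := ⟨hp0X, haξ⟩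
    rw [hset] at hm
    obtain ⟨h', hq⟩ := hm
    exact hq
  have hQ2 : Q ⟨(p 2).rep, hcξ⟩ = 0 := by
    have hm : p 2 ∈ X ∩ projPts ξ := ⟨hp2X, hcξ⟩
    rw [hset] at hm
    obtain ⟨h', hq⟩ := hm
    exact hq
  have hpolar : QuadraticMap.polar (⇑Q) ⟨(p 0).rep, haξ⟩ ⟨(p 2).rep, hcξ⟩ ≠ 0 := by
    intro hpol
    apply h02
    refine ⟨hp0X, hp2X, Submodule.span K {(p 0).rep, (p 2).rep},
      ⟨finrank_span_pair_eq_two (indep_of_ne _ _ h02ne), ?_⟩,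
      Submodule.subset_span (Set.mem_insert _ _),
      Submodule.subset_span (Set.mem_insert_of_mem _ rfl)⟩
    intro x hx
    obtain ⟨α, γ, hx'⟩ := Submodule.mem_span_pair.mp hx
    have hxξ : x.rep ∈ ξ := by
      rw [← hx']
      exact add_mem (Submodule.smul_mem _ _ haξ) (Submodule.smul_mem _ _ hcξ)
    have hmem : x ∈ X ∩ projPts ξ := by
      rw [hset]
      refine ⟨hxξ, ?_⟩
      have hxv : (⟨x.rep, hxξ⟩ : ↥ξ) =
          α • (⟨(p 0).rep, haξ⟩ : ↥ξ) + γ • (⟨(p 2).rep, hcξ⟩ : ↥ξ) := by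
        apply Subtype.ext
        simp [← hx']
      rw [hxv, quadratic_map_add, QuadraticMap.polar_smul_left, QuadraticMap.polar_smul_right,
        QuadraticMap.map_smul, QuadraticMap.map_smul, hQ0, hQ2, hpol]
      simp
    exact hmem.1
  have hdQ : Q (⟨(p 0).rep, haξ⟩ - ⟨(p 2).rep, hcξ⟩) ≠ 0 := by
    have hsub : (⟨(p 0).rep, haξ⟩ - ⟨(p 2).rep, hcξ⟩ : ↥ξ) =
        ⟨(p 0).rep, haξ⟩ + (-1 : K) • ⟨(p 2).rep, hcξ⟩ := by
      apply Subtype.ext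
      simp [sub_eq_add_neg]
    rw [hsub, quadratic_map_add, QuadraticMap.polar_smul_right, QuadraticMap.map_smul, hQ0, hQ2]
    simpa using hpolar
  have hdne : (p 0).rep - (p 2).rep ≠ 0 := rep_sub_ne_zero _ _ h02ne
  -- key step
  have key : ∀ (w₁ w₂ : V) (i j : Fin 4) (hw₁ : w₁ ≠ 0) (hw₂ : w₂ ≠ 0),
      w₁ ∈ L i → w₂ ∈ L j →
      w₁ - w₂ = (p 0).rep - (p 2).rep ∨ w₂ - w₁ = (p 0).rep - (p 2).rep →
      w₁ ∈ ξ ∧ w₂ ∈ ξ := by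
    intro w₁ w₂ i j hw₁ hw₂ hwi hwj hdiff
    obtain ⟨κ₁, hκ₁⟩ := exists_unit_smul_rep_mk (K := K) w₁ hw₁
    obtain ⟨κ₂, hκ₂⟩ := exists_unit_smul_rep_mk (K := K) w₂ hw₂
    have hu : Projectivization.mk K w₁ hw₁ ∈ X := hX i (by
      show (Projectivization.mk K w₁ hw₁).rep ∈ L i
      rw [← hκ₁]; exact Submodule.smul_mem _ _ hwi)
    have hv : Projectivization.mk K w₂ hw₂ ∈ X := hX j (by
      show (Projectivization.mk K w₂ hw₂).rep ∈ L j
      rw [← hκ₂]; exact Submodule.smul_mem _ _ hwj)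
    obtain ⟨θ, hθXi, huθ, hvθ⟩ := h.mm1 _ hu _ hv
    have hw₁θ : w₁ ∈ θ := by
      have : w₁ = ((κ₁⁻¹ : Kˣ) : K) • (Projectivization.mk K w₁ hw₁).rep := by
        rw [← hκ₁, smul_smul, Units.inv_mul, one_smul]
      rw [this]
      exact Submodule.smul_mem _ _ huθ
    have hw₂θ : w₂ ∈ θ := by
      have : w₂ = ((κ₂⁻¹ : Kˣ) : K) • (Projectivization.mk K w₂ hw₂).rep := by
        rw [← hκ₂, smul_smul, Units.inv_mul, one_smul]
      rw [this]
      exact Submodule.smul_mem _ _ hvθ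
    by_cases hθξ : θ = ξ
    · exact ⟨hθξ ▸ hw₁θ, hθξ ▸ hw₂θ⟩
    · exfalso
      have hdθ : (p 0).rep - (p 2).rep ∈ θ := by
        rcases hdiff with hd | hd
        · rw [← hd]; exact sub_mem hw₁θ hw₂θ
        · rw [← hd]; exact sub_mem hw₂θ hw₁θ
      have hdξ : (p 0).rep - (p 2).rep ∈ ξ := sub_mem haξ hcξ
      obtain ⟨κ, hκ⟩ := exists_unit_smul_rep_mk (K := K) ((p 0).rep - (p 2).rep) hdne
      set m := Projectivization.mk K ((p 0).rep - (p 2).rep) hdne with hm_def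
      have hmθξ : m.rep ∈ θ ⊓ ξ := by
        rw [← hκ]
        exact Submodule.mem_inf.mpr ⟨Submodule.smul_mem _ _ hdθ, Submodule.smul_mem _ _ hdξ⟩
      have hmX : m ∈ X := h.mm2 θ hθXi ξ hξXi hθξ hmθξ
      have hmξ : m.rep ∈ ξ := (Submodule.mem_inf.mp hmθξ).2
      have hmm : m ∈ X ∩ projPts ξ := ⟨hmX, hmξ⟩
      rw [hset] at hmm
      obtain ⟨h', hq⟩ := hmm
      have hval : (⟨m.rep, h'⟩ : ↥ξ) =
          (κ : K) • (⟨(p 0).rep, haξ⟩ - ⟨(p 2).rep, hcξ⟩) := by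
        apply Subtype.ext
        simp [← hκ]
      rw [hval, QuadraticMap.map_smul, smul_eq_mul] at hq
      rcases mul_eq_zero.mp hq with hz | hz
      · rcases mul_eq_zero.mp hz with hz' | hz' <;> exact κ.ne_zero hz'
      · exact hdQ hz
  obtain ⟨h1, h2⟩ := key ((p 0).rep + (p 1).rep) ((p 1).rep + (p 2).rep) 1 2
    (rep_add_ne_zero _ _ h01) (rep_add_ne_zero _ _ h12)
    (add_mem ha1 hb1) (add_mem hb2 hc2) (Or.inl (by abel))
  have hbξ : (p 1).rep ∈ ξ := by
    have hs := sub_mem h1 haξ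
    have : (p 0).rep + (p 1).rep - (p 0).rep = (p 1).rep := by abel
    rwa [this] at hs
  obtain ⟨h3, h4⟩ := key ((p 2).rep + (p 3).rep) ((p 3).rep + (p 0).rep) 3 0
    (rep_add_ne_zero _ _ h23) (rep_add_ne_zero _ _ h30)
    (add_mem hc3 he3) (add_mem he0 ha0) (Or.inr (by abel))
  have heξ : (p 3).rep ∈ ξ := by
    have hs := sub_mem h3 hcξ
    have : (p 2).rep + (p 3).rep - (p 2).rep = (p 3).rep := by abel
    rwa [this] at hs
  have hspan_le : ∀ (w w' : V), w ∈ ξ → w' ∈ ξ → Submodule.span K {w, w'} ≤ ξ := by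
    intro w w' hw hw'
    exact Submodule.span_le.mpr (Set.insert_subset_iff.mpr ⟨hw, Set.singleton_subset_iff.mpr hw'⟩)
  have hL0ξ : L 0 ≤ ξ := by
    rw [line_eq_span (hL 0) h30 he0 ha0]; exact hspan_le _ _ heξ haξ
  have hL1ξ : L 1 ≤ ξ := by
    rw [line_eq_span (hL 1) h01 ha1 hb1]; exact hspan_le _ _ haξ hbξ
  have hL2ξ : L 2 ≤ ξ := by
    rw [line_eq_span (hL 2) h12 hb2 hc2]; exact hspan_le _ _ hbξ hcξ
  have hL3ξ : L 3 ≤ ξ := by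
    rw [line_eq_span (hL 3) h23 hc3 he3]; exact hspan_le _ _ hcξ heξ
  refine ⟨ξ, ⟨hξXi, hL0ξ, hL1ξ, hL2ξ, hL3ξ⟩, ?_⟩
  rintro ξ' ⟨hξ'Xi, hL0', hL1', hL2', hL3'⟩
  by_contra hne
  have hmm2 := h.mm2 ξ' hξ'Xi ξ hξXi hne
  apply h02
  refine ⟨hp0X, hp2X, Submodule.span K {(p 0).rep, (p 2).rep},
    ⟨finrank_span_pair_eq_two (indep_of_ne _ _ h02ne), ?_⟩,
    Submodule.subset_span (Set.mem_insert _ _),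
    Submodule.subset_span (Set.mem_insert_of_mem _ rfl)⟩
  intro x hx
  apply hmm2
  show x.rep ∈ ξ' ⊓ ξ
  have hsub : Submodule.span K {(p 0).rep, (p 2).rep} ≤ ξ' ⊓ ξ := by
    apply Submodule.span_le.mpr
    refine Set.insert_subset_iff.mpr ⟨Submodule.mem_inf.mpr ⟨hL0' ha0, haξ⟩,
      Set.singleton_subset_iff.mpr (Submodule.mem_inf.mpr ⟨hL2' hc2, hcξ⟩)⟩
  exact hsub hx


end MMset
end

section
/- Let (X,Ξ) be a pre-Mazzocca-Melone set of split type d. Let p ∈ X and let H be a symp not containing p. Then the set of points of H that are X-collinear with p is either empty or constitutes a singular subspace of H. -/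
/-!
Formalization of definitions from "On the varieties of the second row of the
split Freudenthal-Tits Magic Square" by Schillewaert and Van Maldeghem.

Points of the projective space `P(V)` are elements of `ℙ K V`; projective
subspaces are represented by linear subspaces (`Submodule K V`), so a projective
`k`-space corresponds to a submodule of linear dimension `k + 1`.
-/

open scoped LinearAlgebra.Projectivization
open Projectivization Module

namespace MMset

open scoped LinearAlgebra.Projectivization



section CollinearHelpers

variable {K : Type*} [Field K] {V : Type*} [AddCommGroup V] [Module K V]

lemma mk_mem_projPts {W : Submodule K V} {v : V} (hv : v ≠ 0) (hvW : v ∈ W) :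
    Projectivization.mk K v hv ∈ projPts W := by
  obtain ⟨a, ha⟩ := Projectivization.exists_smul_eq_mk_rep K v hv
  show (Projectivization.mk K v hv).rep ∈ W
  rw [← ha]
  exact W.smul_mem _ hvW

lemma vec_mem_of_rep_mem {W : Submodule K V} {v : V} (hv : v ≠ 0)
    (h : (Projectivization.mk K v hv).rep ∈ W) : v ∈ W := by
  obtain ⟨c, hc⟩ := Projectivization.exists_smul_eq_mk_rep K v hv
  have h2 := W.smul_mem ((c⁻¹ : Kˣ) : K) h
  rwa [← hc, Units.smul_def, smul_smul, Units.inv_mul, one_smul] at h2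

lemma mk_eq_of_smul {v : V} {a : K} (ha : a ≠ 0) (h : a • v ≠ 0) (hv : v ≠ 0) :
    Projectivization.mk K (a • v) h = Projectivization.mk K v hv :=
  (Projectivization.mk_eq_mk_iff K _ _ _ _).2 ⟨Units.mk0 a ha, rfl⟩

lemma eq_mk_of_rep_smul {x : ℙ K V} {v : V} (hv : v ≠ 0) {b : K} (hb : b ≠ 0)
    (h : x.rep = b • v) : x = Projectivization.mk K v hv := by
  conv_lhs => rw [← Projectivization.mk_rep x]
  refine (Projectivization.mk_eq_mk_iff K _ _ _ _).2 ⟨Units.mk0 b hb, ?_⟩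
  rw [Units.smul_def, Units.val_mk0]
  exact h.symm

lemma eq_of_rep_eq_smul {x y : ℙ K V} {a : K} (ha : a ≠ 0) (hxy : x.rep = a • y.rep) : x = y := by
  rw [eq_mk_of_rep_smul y.rep_nonzero ha hxy]
  exact Projectivization.mk_rep y

lemma locus_quadric_zero {W : Submodule K V} {Q : QuadraticForm K ↥W} {X : Set (ℙ K V)}
    (hloc : X ∩ projPts W = {x : ℙ K V | ∃ h : x.rep ∈ W, Q ⟨x.rep, h⟩ = 0})
    {v : V} (hv : v ≠ 0) (hvW : v ∈ W) (hvX : Projectivization.mk K v hv ∈ X) :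
    Q ⟨v, hvW⟩ = 0 := by
  have hmem : Projectivization.mk K v hv ∈ X ∩ projPts W := ⟨hvX, mk_mem_projPts hv hvW⟩
  rw [hloc] at hmem
  obtain ⟨h, hQ⟩ := hmem
  obtain ⟨a, ha⟩ := Projectivization.exists_smul_eq_mk_rep K v hv
  have he : (⟨(Projectivization.mk K v hv).rep, h⟩ : ↥W) = ((a : K) • ⟨v, hvW⟩ : ↥W) :=
    Subtype.ext (by simp [← ha, Units.smul_def])
  rw [he, QuadraticMap.map_smul, smul_eq_mul] at hQ
  rcases mul_eq_zero.1 hQ with h1 | h2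
  · exact absurd h1 (mul_ne_zero a.ne_zero a.ne_zero)
  · exact h2

lemma mem_of_locus_zero {W : Submodule K V} {Q : QuadraticForm K ↥W} {X : Set (ℙ K V)}
    (hloc : X ∩ projPts W = {x : ℙ K V | ∃ h : x.rep ∈ W, Q ⟨x.rep, h⟩ = 0})
    {v : V} (hv : v ≠ 0) (hvW : v ∈ W) (hQ : Q ⟨v, hvW⟩ = 0) :
    Projectivization.mk K v hv ∈ X := by
  have hmem : Projectivization.mk K v hv ∈ X ∩ projPts W := by
    rw [hloc]
    obtain ⟨a, ha⟩ := Projectivization.exists_smul_eq_mk_rep K v hv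
    have hrep : (Projectivization.mk K v hv).rep ∈ W := by rw [← ha]; exact W.smul_mem _ hvW
    refine ⟨hrep, ?_⟩
    have he : (⟨(Projectivization.mk K v hv).rep, hrep⟩ : ↥W) = ((a : K) • ⟨v, hvW⟩ : ↥W) :=
      Subtype.ext (by simp [← ha, Units.smul_def])
    rw [he, QuadraticMap.map_smul, hQ, smul_zero]
  exact hmem.1

lemma quadratic_map_add' {M : Type*} [AddCommGroup M] [Module K M]
    (Q : QuadraticForm K M) (x y : M) :
    Q (x + y) = QuadraticMap.polar ⇑Q x y + Q x + Q y := by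
  show _ = (Q (x + y) - Q x - Q y) + Q x + Q y
  ring

end CollinearHelpers

/-- Let `(X, Ξ)` be a pre-Mazzocca-Melone set of split type `d`, `p ∈ X` and `H = X(ξ)`
a symp not containing `p`.  Then the set of points of `H` that are `X`-collinear
with `p` is either empty or constitutes a singular subspace of `H`. -/
theorem collinear_points_of_symp {K : Type*} [Field K] {V : Type*} [AddCommGroup V]
    [Module K V] (d : ℕ) (hd : 1 ≤ d) (X : Set (ℙ K V)) (Xi : Set (Submodule K V))
    (h : IsPreMM d ⊤ X Xi) (p : ℙ K V) (hp : p ∈ X)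
    (ξ : Submodule K V) (hξ : ξ ∈ Xi) (hpξ : p.rep ∉ ξ) :
    {y : ℙ K V | y.rep ∈ ξ ∧ XCollinear X p y} = ∅ ∨
    ∃ W : Submodule K V, W ≤ ξ ∧ IsSingular X W ∧
      {y : ℙ K V | y.rep ∈ ξ ∧ XCollinear X p y} = projPts W := by
  classical
  obtain ⟨Qξ, -, -, hlocξ⟩ := h.xi_quadric ξ hξ
  -- the quadratic form of `ξ` vanishes on points of `X` in `ξ`
  have hQS : ∀ (y : ℙ K V) (hyξ : y.rep ∈ ξ), y ∈ X → Qξ ⟨y.rep, hyξ⟩ = 0 := by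
    intro y hyξ hyX
    refine locus_quadric_zero hlocξ y.rep_nonzero hyξ ?_
    rw [Projectivization.mk_rep]; exact hyX
  -- Step 1: two distinct points of ξ collinear with p have vanishing polar form
  have hpolar : ∀ (y₁ y₂ : ℙ K V) (hy₁ξ : y₁.rep ∈ ξ) (hy₂ξ : y₂.rep ∈ ξ),
      XCollinear X p y₁ → XCollinear X p y₂ → y₁ ≠ y₂ →
      QuadraticMap.polar ⇑Qξ ⟨y₁.rep, hy₁ξ⟩ ⟨y₂.rep, hy₂ξ⟩ = 0 := by
    intro y₁ y₂ hy₁ξ hy₂ξ hc₁ hc₂ hne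
    obtain ⟨-, hy₁X, L₁, ⟨-, hL₁X⟩, hPL₁, hY₁L₁⟩ := hc₁
    obtain ⟨-, hy₂X, L₂, ⟨-, hL₂X⟩, hPL₂, hY₂L₂⟩ := hc₂
    have hz₁0 : p.rep + y₁.rep ≠ 0 := by
      intro h0
      exact hpξ (by rw [eq_neg_of_add_eq_zero_left h0]; exact ξ.neg_mem hy₁ξ)
    have hz₂0 : p.rep + y₂.rep ≠ 0 := by
      intro h0
      exact hpξ (by rw [eq_neg_of_add_eq_zero_left h0]; exact ξ.neg_mem hy₂ξ)
    have hz₁X : Projectivization.mk K _ hz₁0 ∈ X :=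
      hL₁X (mk_mem_projPts hz₁0 (L₁.add_mem hPL₁ hY₁L₁))
    have hz₂X : Projectivization.mk K _ hz₂0 ∈ X :=
      hL₂X (mk_mem_projPts hz₂0 (L₂.add_mem hPL₂ hY₂L₂))
    obtain ⟨τ, hτ, hm₁, hm₂⟩ := h.mm1 _ hz₁X _ hz₂X
    have hv₁ : p.rep + y₁.rep ∈ τ := vec_mem_of_rep_mem hz₁0 hm₁
    have hv₂ : p.rep + y₂.rep ∈ τ := vec_mem_of_rep_mem hz₂0 hm₂
    have hu : y₁.rep - y₂.rep ∈ τ := by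
      have h2 := τ.sub_mem hv₁ hv₂
      rwa [add_sub_add_left_eq_sub] at h2
    have huξ : y₁.rep - y₂.rep ∈ ξ := ξ.sub_mem hy₁ξ hy₂ξ
    have hu0 : y₁.rep - y₂.rep ≠ 0 := by
      rw [sub_ne_zero]
      intro h0
      exact hne (eq_of_rep_eq_smul one_ne_zero (by rw [one_smul]; exact h0))
    have hτξ : τ ≠ ξ := by
      rintro rfl
      apply hpξ
      have h2 := τ.sub_mem hv₁ hy₁ξ
      rwa [add_sub_cancel_right] at h2
    have huX : Projectivization.mk K _ hu0 ∈ X :=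
      h.mm2 τ hτ ξ hξ hτξ (mk_mem_projPts hu0 (Submodule.mem_inf.2 ⟨hu, huξ⟩))
    have hQu : Qξ ⟨y₁.rep - y₂.rep, huξ⟩ = 0 := locus_quadric_zero hlocξ hu0 huξ huX
    have hQ1 : Qξ ⟨y₁.rep, hy₁ξ⟩ = 0 := hQS y₁ hy₁ξ hy₁X
    have hQ2 : Qξ ⟨y₂.rep, hy₂ξ⟩ = 0 := hQS y₂ hy₂ξ hy₂X
    have hsub : (⟨y₁.rep, hy₁ξ⟩ : ↥ξ) + -⟨y₂.rep, hy₂ξ⟩ = ⟨y₁.rep - y₂.rep, huξ⟩ :=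
      Subtype.ext (by simp [sub_eq_add_neg])
    have hneg : QuadraticMap.polar ⇑Qξ ⟨y₁.rep, hy₁ξ⟩ (-⟨y₂.rep, hy₂ξ⟩) = 0 := by
      show Qξ _ - Qξ _ - Qξ _ = 0
      rw [hsub, hQu, hQ1, QuadraticMap.map_neg, hQ2]
      ring
    have h3 := QuadraticMap.polar_neg_right (Q := Qξ) ⟨y₁.rep, hy₁ξ⟩ ⟨y₂.rep, hy₂ξ⟩
    rw [hneg] at h3
    exact neg_eq_zero.mp h3.symm
  -- Step 2: all points of the plane spanned by p, y₁, y₂ belong to X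
  have hplane : ∀ (y₁ y₂ : ℙ K V) (hy₁ξ : y₁.rep ∈ ξ) (hy₂ξ : y₂.rep ∈ ξ),
      XCollinear X p y₁ → XCollinear X p y₂ → y₁ ≠ y₂ → ∀ (s t : K), s ≠ 0 → t ≠ 0 →
      ∀ hw : p.rep + s • y₁.rep + t • y₂.rep ≠ 0,
      Projectivization.mk K _ hw ∈ X := by
    intro y₁ y₂ hy₁ξ hy₂ξ hc₁ hc₂ hne s t hs ht hw
    obtain ⟨-, hy₁X, L₁, ⟨hL₁f, hL₁X⟩, hPL₁, hY₁L₁⟩ := hc₁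
    obtain ⟨-, hy₂X, L₂, ⟨hL₂f, hL₂X⟩, hPL₂, hY₂L₂⟩ := hc₂
    have hz₁0 : p.rep + s • y₁.rep ≠ 0 := by
      intro h0
      exact hpξ (by rw [eq_neg_of_add_eq_zero_left h0]; exact ξ.neg_mem (ξ.smul_mem s hy₁ξ))
    have hz₂0 : p.rep + t • y₂.rep ≠ 0 := by
      intro h0
      exact hpξ (by rw [eq_neg_of_add_eq_zero_left h0]; exact ξ.neg_mem (ξ.smul_mem t hy₂ξ))
    have hz₁X : Projectivization.mk K _ hz₁0 ∈ X :=
      hL₁X (mk_mem_projPts hz₁0 (L₁.add_mem hPL₁ (L₁.smul_mem s hY₁L₁)))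
    have hz₂X : Projectivization.mk K _ hz₂0 ∈ X :=
      hL₂X (mk_mem_projPts hz₂0 (L₂.add_mem hPL₂ (L₂.smul_mem t hY₂L₂)))
    obtain ⟨τ, hτ, hmz₁, hmy₂⟩ := h.mm1 _ hz₁X y₂ hy₂X
    obtain ⟨τ', hτ', hmz₂, hmy₁⟩ := h.mm1 _ hz₂X y₁ hy₁X
    have hv₁ : p.rep + s • y₁.rep ∈ τ := vec_mem_of_rep_mem hz₁0 hmz₁
    have hv₂ : p.rep + t • y₂.rep ∈ τ' := vec_mem_of_rep_mem hz₂0 hmz₂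
    have hwτ : p.rep + s • y₁.rep + t • y₂.rep ∈ τ := τ.add_mem hv₁ (τ.smul_mem t hmy₂)
    have hwτ' : p.rep + s • y₁.rep + t • y₂.rep ∈ τ' := by
      have h2 := τ'.add_mem hv₂ (τ'.smul_mem s hmy₁)
      rwa [add_right_comm] at h2
    by_cases hττ' : τ = τ'
    · subst hττ'
      have hY₁τ : y₁.rep ∈ τ := hmy₁
      have hY₂τ : y₂.rep ∈ τ := hmy₂
      have hPτ : p.rep ∈ τ := by
        have h2 := τ.sub_mem hv₁ (τ.smul_mem s hY₁τ)
        rwa [add_sub_cancel_right] at h2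
      obtain ⟨Qτ, -, -, hlocτ⟩ := h.xi_quadric τ hτ
      have hQA : Qτ ⟨p.rep, hPτ⟩ = 0 := by
        refine locus_quadric_zero hlocτ p.rep_nonzero hPτ ?_
        rw [Projectivization.mk_rep]; exact hp
      have hQB₁ : Qτ ⟨y₁.rep, hY₁τ⟩ = 0 := by
        refine locus_quadric_zero hlocτ y₁.rep_nonzero hY₁τ ?_
        rw [Projectivization.mk_rep]; exact hy₁X
      have hQB₂ : Qτ ⟨y₂.rep, hY₂τ⟩ = 0 := by
        refine locus_quadric_zero hlocτ y₂.rep_nonzero hY₂τ ?_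
        rw [Projectivization.mk_rep]; exact hy₂X
      -- polar (p, y₁) vanishes in τ
      have h10 : p.rep + y₁.rep ≠ 0 := by
        intro h0
        exact hpξ (by rw [eq_neg_of_add_eq_zero_left h0]; exact ξ.neg_mem hy₁ξ)
      have h20 : p.rep + y₂.rep ≠ 0 := by
        intro h0
        exact hpξ (by rw [eq_neg_of_add_eq_zero_left h0]; exact ξ.neg_mem hy₂ξ)
      have hAB₁mem : p.rep + y₁.rep ∈ τ := τ.add_mem hPτ hY₁τ
      have hAB₂mem : p.rep + y₂.rep ∈ τ := τ.add_mem hPτ hY₂τ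
      have hQAB₁ : Qτ (⟨p.rep, hPτ⟩ + ⟨y₁.rep, hY₁τ⟩) = 0 := by
        have hx : Projectivization.mk K _ h10 ∈ X :=
          hL₁X (mk_mem_projPts h10 (L₁.add_mem hPL₁ hY₁L₁))
        have h2 := locus_quadric_zero hlocτ h10 hAB₁mem hx
        rwa [show (⟨p.rep + y₁.rep, hAB₁mem⟩ : ↥τ) = ⟨p.rep, hPτ⟩ + ⟨y₁.rep, hY₁τ⟩ from
          Subtype.ext rfl] at h2
      have hQAB₂ : Qτ (⟨p.rep, hPτ⟩ + ⟨y₂.rep, hY₂τ⟩) = 0 := by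
        have hx : Projectivization.mk K _ h20 ∈ X :=
          hL₂X (mk_mem_projPts h20 (L₂.add_mem hPL₂ hY₂L₂))
        have h2 := locus_quadric_zero hlocτ h20 hAB₂mem hx
        rwa [show (⟨p.rep + y₂.rep, hAB₂mem⟩ : ↥τ) = ⟨p.rep, hPτ⟩ + ⟨y₂.rep, hY₂τ⟩ from
          Subtype.ext rfl] at h2
      -- polar (y₁, y₂) vanishes in τ, via Step 1 in ξ
      have h120 : y₁.rep + y₂.rep ≠ 0 := by
        intro h0
        refine hne (eq_of_rep_eq_smul (a := -1) (by norm_num) ?_)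
        rw [neg_one_smul, ← eq_neg_of_add_eq_zero_left h0]
      have h12ξ : y₁.rep + y₂.rep ∈ ξ := ξ.add_mem hy₁ξ hy₂ξ
      have h12τ : y₁.rep + y₂.rep ∈ τ := τ.add_mem hY₁τ hY₂τ
      have hQ12ξ : Qξ ⟨y₁.rep + y₂.rep, h12ξ⟩ = 0 := by
        have he : (⟨y₁.rep + y₂.rep, h12ξ⟩ : ↥ξ) = ⟨y₁.rep, hy₁ξ⟩ + ⟨y₂.rep, hy₂ξ⟩ :=
          Subtype.ext rfl
        rw [he, quadratic_map_add',
          hpolar y₁ y₂ hy₁ξ hy₂ξ ⟨hp, hy₁X, L₁, ⟨hL₁f, hL₁X⟩, hPL₁, hY₁L₁⟩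
            ⟨hp, hy₂X, L₂, ⟨hL₂f, hL₂X⟩, hPL₂, hY₂L₂⟩ hne,
          hQS y₁ hy₁ξ hy₁X, hQS y₂ hy₂ξ hy₂X]
        ring
      have hx12 : Projectivization.mk K _ h120 ∈ X := mem_of_locus_zero hlocξ h120 h12ξ hQ12ξ
      have hQ12τ : Qτ (⟨y₁.rep, hY₁τ⟩ + ⟨y₂.rep, hY₂τ⟩) = 0 := by
        have h2 := locus_quadric_zero hlocτ h120 h12τ hx12
        rwa [show (⟨y₁.rep + y₂.rep, h12τ⟩ : ↥τ) = ⟨y₁.rep, hY₁τ⟩ + ⟨y₂.rep, hY₂τ⟩ from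
          Subtype.ext rfl] at h2
      have pol1 : QuadraticMap.polar ⇑Qτ ⟨p.rep, hPτ⟩ ⟨y₁.rep, hY₁τ⟩ = 0 := by
        have h2 := quadratic_map_add' Qτ ⟨p.rep, hPτ⟩ ⟨y₁.rep, hY₁τ⟩
        rw [hQAB₁, hQA, hQB₁] at h2
        simpa using h2.symm
      have pol2 : QuadraticMap.polar ⇑Qτ ⟨p.rep, hPτ⟩ ⟨y₂.rep, hY₂τ⟩ = 0 := by
        have h2 := quadratic_map_add' Qτ ⟨p.rep, hPτ⟩ ⟨y₂.rep, hY₂τ⟩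
        rw [hQAB₂, hQA, hQB₂] at h2
        simpa using h2.symm
      have pol12 : QuadraticMap.polar ⇑Qτ ⟨y₁.rep, hY₁τ⟩ ⟨y₂.rep, hY₂τ⟩ = 0 := by
        have h2 := quadratic_map_add' Qτ ⟨y₁.rep, hY₁τ⟩ ⟨y₂.rep, hY₂τ⟩
        rw [hQ12τ, hQB₁, hQB₂] at h2
        simpa using h2.symm
      have hQw : Qτ (⟨p.rep, hPτ⟩ + s • ⟨y₁.rep, hY₁τ⟩ + t • ⟨y₂.rep, hY₂τ⟩) = 0 := by
        rw [quadratic_map_add' Qτ (⟨p.rep, hPτ⟩ + s • ⟨y₁.rep, hY₁τ⟩) (t • ⟨y₂.rep, hY₂τ⟩),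
          quadratic_map_add' Qτ ⟨p.rep, hPτ⟩ (s • ⟨y₁.rep, hY₁τ⟩),
          QuadraticMap.polar_add_left, QuadraticMap.polar_smul_left,
          QuadraticMap.polar_smul_right, QuadraticMap.polar_smul_right,
          QuadraticMap.polar_smul_right, QuadraticMap.map_smul, QuadraticMap.map_smul,
          pol1, pol2, pol12, hQA, hQB₁, hQB₂]
        simp
      have heq : (⟨p.rep + s • y₁.rep + t • y₂.rep, hwτ⟩ : ↥τ) =
          ⟨p.rep, hPτ⟩ + s • ⟨y₁.rep, hY₁τ⟩ + t • ⟨y₂.rep, hY₂τ⟩ := Subtype.ext rfl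
      refine mem_of_locus_zero hlocτ hw hwτ ?_
      rw [heq]; exact hQw
    · exact h.mm2 τ hτ τ' hτ' hττ' (mk_mem_projPts hw (Submodule.mem_inf.2 ⟨hwτ, hwτ'⟩))
  -- Step 3: the set S is closed under taking spans of pairs
  have hline : ∀ (y₁ y₂ : ℙ K V), (y₁.rep ∈ ξ ∧ XCollinear X p y₁) →
      (y₂.rep ∈ ξ ∧ XCollinear X p y₂) → ∀ (v : V) (hv : v ≠ 0),
      v ∈ Submodule.span K {y₁.rep, y₂.rep} →
      ((Projectivization.mk K v hv).rep ∈ ξ ∧ XCollinear X p (Projectivization.mk K v hv)) := by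
    intro y₁ y₂ hy₁ hy₂ v hv hvmem
    obtain ⟨α, β, hαβ⟩ := Submodule.mem_span_pair.1 hvmem
    by_cases hne : y₁ = y₂
    · subst hne
      rw [← add_smul] at hαβ
      subst hαβ
      have hc : α + β ≠ 0 := by
        rintro h0
        rw [h0, zero_smul] at hv
        exact hv rfl
      rw [mk_eq_of_smul hc hv y₁.rep_nonzero, Projectivization.mk_rep]
      exact hy₁
    · by_cases hα : α = 0
      · rw [hα, zero_smul, zero_add] at hαβ
        subst hαβ
        have hβ : β ≠ 0 := by
          rintro rfl
          rw [zero_smul] at hv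
          exact hv rfl
        rw [mk_eq_of_smul hβ hv y₂.rep_nonzero, Projectivization.mk_rep]
        exact hy₂
      by_cases hβ : β = 0
      · rw [hβ, zero_smul, add_zero] at hαβ
        subst hαβ
        rw [mk_eq_of_smul hα hv y₁.rep_nonzero, Projectivization.mk_rep]
        exact hy₁
      subst hαβ
      have hvξ : α • y₁.rep + β • y₂.rep ∈ ξ :=
        ξ.add_mem (ξ.smul_mem α hy₁.1) (ξ.smul_mem β hy₂.1)
      have repξ : (Projectivization.mk K _ hv).rep ∈ ξ := mk_mem_projPts hv hvξ
      have hQv : Qξ ⟨α • y₁.rep + β • y₂.rep, hvξ⟩ = 0 := by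
        have he : (⟨α • y₁.rep + β • y₂.rep, hvξ⟩ : ↥ξ) =
            α • ⟨y₁.rep, hy₁.1⟩ + β • ⟨y₂.rep, hy₂.1⟩ := Subtype.ext rfl
        rw [he, quadratic_map_add', QuadraticMap.polar_smul_left, QuadraticMap.polar_smul_right,
          QuadraticMap.map_smul, QuadraticMap.map_smul,
          hpolar y₁ y₂ hy₁.1 hy₂.1 hy₁.2 hy₂.2 hne,
          hQS y₁ hy₁.1 hy₁.2.2.1, hQS y₂ hy₂.1 hy₂.2.2.1]
        simp
      have hqX : Projectivization.mk K _ hv ∈ X := mem_of_locus_zero hlocξ hv hvξ hQv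
      refine ⟨repξ, hp, hqX, Submodule.span K {p.rep, α • y₁.rep + β • y₂.rep},
        ⟨?_, ?_⟩, Submodule.subset_span (Set.mem_insert _ _), ?_⟩
      · -- the span is a projective line
        have hind : LinearIndependent K ![p.rep, α • y₁.rep + β • y₂.rep] := by
          rw [LinearIndependent.pair_iff]
          intro a b hab
          by_cases ha : a = 0
          · subst ha
            rw [zero_smul, zero_add] at hab
            rcases smul_eq_zero.1 hab with hb | h0
            · exact ⟨rfl, hb⟩
            · exact absurd h0 hv
          · exfalso
            apply hpξ
            have h5 : a • p.rep ∈ ξ := by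
              rw [eq_neg_of_add_eq_zero_left hab]
              exact ξ.neg_mem (ξ.smul_mem b hvξ)
            have h6 := ξ.smul_mem a⁻¹ h5
            rwa [smul_smul, inv_mul_cancel₀ ha, one_smul] at h6
        have h2 := finrank_span_eq_card (R := K) hind
        have hrange : Set.range ![p.rep, α • y₁.rep + β • y₂.rep] =
            {p.rep, α • y₁.rep + β • y₂.rep} := by
          simp only [Matrix.range_cons, Matrix.range_empty, Set.union_empty,
            Set.union_singleton]
          exact Set.pair_comm _ _
        rw [hrange] at h2
        rw [h2]
        simp
      · -- all points of the line are in X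
        intro x hx
        obtain ⟨a, b, hab⟩ := Submodule.mem_span_pair.1 hx
        by_cases hb : b = 0
        · rw [hb, zero_smul, add_zero] at hab
          have ha : a ≠ 0 := by
            rintro rfl
            rw [zero_smul] at hab
            exact x.rep_nonzero hab.symm
          rw [eq_of_rep_eq_smul ha hab.symm]
          exact hp
        by_cases ha : a = 0
        · rw [ha, zero_smul, zero_add] at hab
          rw [eq_mk_of_rep_smul hv hb hab.symm]
          exact hqX
        · have hs' : a⁻¹ * (b * α) ≠ 0 := by
            apply mul_ne_zero (inv_ne_zero ha) (mul_ne_zero hb hα)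
          have ht' : a⁻¹ * (b * β) ≠ 0 := by
            apply mul_ne_zero (inv_ne_zero ha) (mul_ne_zero hb hβ)
          have hw0 : p.rep + (a⁻¹ * (b * α)) • y₁.rep + (a⁻¹ * (b * β)) • y₂.rep ≠ 0 := by
            intro h0
            apply hpξ
            rw [eq_sub_of_add_eq (eq_neg_of_add_eq_zero_left h0)]
            exact ξ.sub_mem (ξ.neg_mem (ξ.smul_mem _ hy₂.1)) (ξ.smul_mem _ hy₁.1)
          have hwX := hplane y₁ y₂ hy₁.1 hy₂.1 hy₁.2 hy₂.2 hne _ _ hs' ht' hw0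
          have hxrep : x.rep =
              a • (p.rep + (a⁻¹ * (b * α)) • y₁.rep + (a⁻¹ * (b * β)) • y₂.rep) := by
            rw [← hab]
            simp only [smul_add, smul_smul, mul_inv_cancel_left₀ ha]
            abel
          rw [eq_mk_of_rep_smul hw0 ha hxrep]
          exact hwX
      · -- the point itself is on the line
        obtain ⟨c, hc⟩ := Projectivization.exists_smul_eq_mk_rep K _ hv
        rw [← hc]
        exact Submodule.smul_mem _ _
          (Submodule.subset_span (Set.mem_insert_iff.2 (Or.inr rfl)))
  -- assemble the result
  have hsub2 : projPts (Submodule.span K (Projectivization.rep ''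
      {y : ℙ K V | y.rep ∈ ξ ∧ XCollinear X p y})) ⊆
      {y : ℙ K V | y.rep ∈ ξ ∧ XCollinear X p y} := by
    intro x hx
    have hx' : x.rep ∈ Submodule.span K (Projectivization.rep ''
        {y : ℙ K V | y.rep ∈ ξ ∧ XCollinear X p y}) := hx
    have hind : ∀ (v : V), v ∈ Submodule.span K (Projectivization.rep ''
        {y : ℙ K V | y.rep ∈ ξ ∧ XCollinear X p y}) →
        (v = 0 ∨ ∀ hv0 : v ≠ 0, (Projectivization.mk K v hv0).rep ∈ ξ ∧
          XCollinear X p (Projectivization.mk K v hv0)) := by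
      intro v hv
      induction hv using Submodule.span_induction with
      | mem w hw =>
        obtain ⟨y, hyS, rfl⟩ := hw
        right
        intro h0
        have he : Projectivization.mk K y.rep h0 = y := Projectivization.mk_rep y
        rw [he]
        exact hyS
      | zero => exact Or.inl rfl
      | add u w hu hw ihu ihw =>
        by_cases hu0 : u = 0
        · subst hu0; rw [zero_add]; exact ihw
        by_cases hw0 : w = 0
        · subst hw0; rw [add_zero]; exact ihu
        by_cases h0 : u + w = 0
        · exact Or.inl h0
        right
        intro h0'
        have hmu := (ihu.resolve_left hu0) hu0
        have hmw := (ihw.resolve_left hw0) hw0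
        have humem : u ∈ Submodule.span K
            {(Projectivization.mk K u hu0).rep, (Projectivization.mk K w hw0).rep} :=
          vec_mem_of_rep_mem hu0 (Submodule.subset_span (Set.mem_insert _ _))
        have hwmem : w ∈ Submodule.span K
            {(Projectivization.mk K u hu0).rep, (Projectivization.mk K w hw0).rep} :=
          vec_mem_of_rep_mem hw0
            (Submodule.subset_span (Set.mem_insert_iff.2 (Or.inr rfl)))
        exact hline _ _ hmu hmw (u + w) h0' (Submodule.add_mem _ humem hwmem)
      | smul a u hu ihu =>
        by_cases hu0 : u = 0
        · subst hu0; rw [smul_zero]; exact Or.inl rfl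
        by_cases h0 : a • u = 0
        · exact Or.inl h0
        right
        intro h0'
        have ha : a ≠ 0 := fun h' => h0 (by rw [h', zero_smul])
        rw [mk_eq_of_smul ha h0' hu0]
        exact (ihu.resolve_left hu0) hu0
    rcases hind x.rep hx' with h0 | hmk
    · exact absurd h0 x.rep_nonzero
    · have h2 := hmk x.rep_nonzero
      rwa [Projectivization.mk_rep] at h2
  right
  refine ⟨Submodule.span K (Projectivization.rep ''
      {y : ℙ K V | y.rep ∈ ξ ∧ XCollinear X p y}), ?_, ?_, ?_⟩
  · rw [Submodule.span_le]
    rintro _ ⟨y, hyS, rfl⟩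
    exact hyS.1
  · intro x hx
    exact (hsub2 hx).2.2.1
  · apply Set.Subset.antisymm
    · intro y hy
      exact Submodule.subset_span ⟨y, hy, rfl⟩
    · exact hsub2


end MMset
end

section
/- Let (X,Ξ) be a pre-Mazzocca-Melone set of split type d. A pair of singular k-spaces, k ≥ 0, that intersect in a singular (k−1)-space is either contained in a symp, or contained in a singular (k+1)-space. In particular, if k > ⌊d/2⌋, then such a pair is always contained in a singular (k+1)-space. -/
/-!
Formalization of definitions from "On the varieties of the second row of the
split Freudenthal-Tits Magic Square" by Schillewaert and Van Maldeghem.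

Points of the projective space `P(V)` are elements of `ℙ K V`; projective
subspaces are represented by linear subspaces (`Submodule K V`), so a projective
`k`-space corresponds to a submodule of linear dimension `k + 1`.
-/

open scoped LinearAlgebra.Projectivization
open Projectivization Module

namespace MMset

open scoped LinearAlgebra.Projectivization

section AuxLemmas

variable {K : Type*} [Field K] {V : Type*} [AddCommGroup V] [Module K V]

private lemma exists_rep_eq_smul (v : V) (hv : v ≠ 0) :
    ∃ t : K, t ≠ 0 ∧ (Projectivization.mk K v hv).rep = t • v := by
  obtain ⟨t, ht⟩ := Projectivization.exists_smul_eq_mk_rep K v hv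
  exact ⟨(t : K), t.ne_zero, by rw [← ht, Units.smul_def]⟩

private lemma rep_mem_iff {W : Submodule K V} {v : V} (hv : v ≠ 0) :
    (Projectivization.mk K v hv).rep ∈ W ↔ v ∈ W := by
  obtain ⟨t, ht0, ht⟩ := exists_rep_eq_smul (K := K) v hv
  rw [ht]
  constructor
  · intro hmem
    have := W.smul_mem t⁻¹ hmem
    rwa [smul_smul, inv_mul_cancel₀ ht0, one_smul] at this
  · exact fun hmem => W.smul_mem t hmem

/-- Membership in `X` of the point of a nonzero vector of a symp is governed by the
quadratic form of the symp. -/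
private lemma quadric_mem {X : Set (ℙ K V)} {ξ : Submodule K V} {Q : QuadraticForm K ↥ξ}
    (hset : X ∩ projPts ξ = {x : ℙ K V | ∃ h : x.rep ∈ ξ, Q ⟨x.rep, h⟩ = 0})
    {v : V} (hv0 : v ≠ 0) (hvξ : v ∈ ξ) :
    Projectivization.mk K v hv0 ∈ X ↔ Q ⟨v, hvξ⟩ = 0 := by
  obtain ⟨t, ht0, ht⟩ := exists_rep_eq_smul (K := K) v hv0
  have hrep : (Projectivization.mk K v hv0).rep ∈ ξ := by rw [ht]; exact ξ.smul_mem _ hvξ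
  have hsub : (⟨(Projectivization.mk K v hv0).rep, hrep⟩ : ↥ξ) = t • ⟨v, hvξ⟩ :=
    Subtype.ext (by simp [ht])
  constructor
  · intro hX
    have hx : Projectivization.mk K v hv0 ∈ {x : ℙ K V | ∃ h : x.rep ∈ ξ, Q ⟨x.rep, h⟩ = 0} := by
      rw [← hset]; exact ⟨hX, hrep⟩
    obtain ⟨h', hq⟩ := hx
    have h0 : (t * t) • Q ⟨v, hvξ⟩ = 0 := by
      rw [← QuadraticMap.map_smul, ← hsub]; exact hq
    rw [smul_eq_mul] at h0
    exact (mul_eq_zero.mp h0).resolve_left (mul_ne_zero ht0 ht0)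
  · intro hq
    have hx : Projectivization.mk K v hv0 ∈ {x : ℙ K V | ∃ h : x.rep ∈ ξ, Q ⟨x.rep, h⟩ = 0} :=
      ⟨hrep, by rw [hsub, QuadraticMap.map_smul, hq, smul_zero]⟩
    rw [← hset] at hx
    exact hx.1

private lemma fd_of_le {D A : Submodule K V} (hle : D ≤ A) [FiniteDimensional K A] :
    FiniteDimensional K D :=
  (Submodule.comapSubtypeEquivOfLe hle).finiteDimensional

/-- If `D ≤ A`, `a ∈ A ∖ D` and `dim A = dim D + 1`, then `A = D ⊔ ⟨a⟩`. -/
private lemma sup_span_eq_of_finrank {A D : Submodule K V} [FiniteDimensional K A]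
    (hDA : D ≤ A) {a : V} (haA : a ∈ A) (haD : a ∉ D)
    (hfr : Module.finrank K A = Module.finrank K D + 1) :
    D ⊔ Submodule.span K {a} = A := by
  have ha0 : a ≠ 0 := fun hh => haD (hh ▸ D.zero_mem)
  haveI : FiniteDimensional K D := fd_of_le hDA
  haveI : FiniteDimensional K ↥(Submodule.span K {a}) :=
    FiniteDimensional.of_finrank_pos (by rw [finrank_span_singleton ha0]; omega)
  have hint : D ⊓ Submodule.span K {a} = ⊥ := by
    rw [eq_bot_iff]
    intro x hx
    have hxD : x ∈ D := hx.1
    have hxs : x ∈ Submodule.span K {a} := hx.2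
    rw [Submodule.mem_span_singleton] at hxs
    obtain ⟨r, rfl⟩ := hxs
    rcases eq_or_ne r 0 with rfl | hr
    · simp
    · exfalso
      apply haD
      have := D.smul_mem r⁻¹ hxD
      rwa [smul_smul, inv_mul_cancel₀ hr, one_smul] at this
  have hsup := Submodule.finrank_sup_add_finrank_inf_eq D (Submodule.span K {a})
  rw [hint, finrank_span_singleton ha0, finrank_bot] at hsup
  exact Submodule.eq_of_le_of_finrank_le
    (sup_le hDA (Submodule.span_le.mpr (Set.singleton_subset_iff.mpr haA)))
    (by omega)

/-- A totally singular subspace of a nondegenerate quadratic space has at most half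
the dimension. -/
private lemma isotropic_finrank_bound {W : Type*} [AddCommGroup W] [Module K W]
    [FiniteDimensional K W] (Q : QuadraticForm K W)
    (hnd : ∀ v : W, Q v = 0 → (∀ w : W, QuadraticMap.polar Q v w = 0) → v = 0)
    (N : Submodule K W) (hN : ∀ v ∈ N, Q v = 0) :
    Module.finrank K N + Module.finrank K N ≤ Module.finrank K W := by
  have hpol : ∀ u ∈ N, ∀ v ∈ N, QuadraticMap.polar (⇑Q) u v = 0 := by
    intro u hu v hv
    have h1 := hN _ (N.add_mem hu hv)
    simp [QuadraticMap.polar, h1, hN u hu, hN v hv]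
  have hker : ∀ v : ↥N, N ≤ LinearMap.ker ((QuadraticMap.polarBilin Q).flip (v : W)) := by
    intro v u hu
    rw [LinearMap.mem_ker, LinearMap.flip_apply, QuadraticMap.polarBilin_apply_apply]
    exact hpol u hu (v : W) v.2
  let η : ↥N →ₗ[K] Module.Dual K (W ⧸ N) :=
    { toFun := fun v => N.liftQ ((QuadraticMap.polarBilin Q).flip (v : W)) (hker v)
      map_add' := by
        intro u v
        apply Submodule.linearMap_qext
        ext w
        simp [QuadraticMap.polar_add_right]
      map_smul' := by
        intro cc v
        apply Submodule.linearMap_qext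
        ext w
        simp [QuadraticMap.polar_smul_right] }
  have hinj : Function.Injective η := by
    rw [← LinearMap.ker_eq_bot, LinearMap.ker_eq_bot']
    intro v hv
    have hz : ∀ w : W, QuadraticMap.polar (⇑Q) (v : W) w = 0 := by
      intro w
      have hw := LinearMap.congr_fun hv (Submodule.Quotient.mk w)
      rw [QuadraticMap.polar_comm]
      simpa [η, Submodule.liftQ_apply] using hw
    exact Subtype.ext (hnd _ (hN _ v.2) hz)
  have h1 : Module.finrank K ↥N ≤ Module.finrank K (W ⧸ N) := by
    have hle := LinearMap.finrank_le_finrank_of_injective hinj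
    rwa [Subspace.dual_finrank_eq] at hle
  have h2 := N.finrank_quotient_add_finrank
  omega

end AuxLemmas

/-- Let `(X, Ξ)` be a pre-Mazzocca-Melone set of split type `d`.  A pair of singular
`k`-spaces, `k ≥ 0`, meeting in a singular `(k-1)`-space is either contained in a
symp or in a singular `(k+1)`-space; if `k > ⌊d/2⌋`, such a pair is always contained
in a singular `(k+1)`-space.  (A projective `k`-space has linear dimension `k + 1`.) -/
theorem singular_pair_lemma {K : Type*} [Field K] {V : Type*} [AddCommGroup V]
    [Module K V] (d : ℕ) (hd : 1 ≤ d) (X : Set (ℙ K V)) (Xi : Set (Submodule K V))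
    (h : IsPreMM d ⊤ X Xi) (k : ℕ) (A B : Submodule K V)
    (hA : Module.finrank K ↥A = k + 1) (hB : Module.finrank K ↥B = k + 1)
    (hAX : IsSingular X A) (hBX : IsSingular X B)
    (hAB : Module.finrank K ↥(A ⊓ B : Submodule K V) = k) :
    ((∃ ξ ∈ Xi, A ≤ ξ ∧ B ≤ ξ) ∨
     (∃ C : Submodule K V, Module.finrank K ↥C = k + 2 ∧ IsSingular X C ∧
        A ≤ C ∧ B ≤ C)) ∧
    (d / 2 < k → ∃ C : Submodule K V, Module.finrank K ↥C = k + 2 ∧ IsSingular X C ∧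
        A ≤ C ∧ B ≤ C) := by
  classical
  haveI hAfd : FiniteDimensional K A := FiniteDimensional.of_finrank_pos (by rw [hA]; omega)
  haveI hBfd : FiniteDimensional K B := FiniteDimensional.of_finrank_pos (by rw [hB]; omega)
  have hCdim : Module.finrank K ↥(A ⊔ B : Submodule K V) = k + 2 := by
    have hh := Submodule.finrank_sup_add_finrank_inf_eq A B
    rw [hA, hB, hAB] at hh
    omega
  have main : (∃ ξ ∈ Xi, A ≤ ξ ∧ B ≤ ξ) ∨ IsSingular X (A ⊔ B) := by
    by_cases hα : ∃ ξ ∈ Xi, A ≤ ξ ∧ B ≤ ξ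
    · exact Or.inl hα
    · right
      intro x hx
      by_cases hxA : x ∈ projPts A
      · exact hAX hxA
      by_cases hxB : x ∈ projPts B
      · exact hBX hxB
      have hx' : x.rep ∈ A ⊔ B := hx
      obtain ⟨a, ha, b, hb, hab⟩ := Submodule.mem_sup.mp hx'
      have hbA : b ∉ A := fun hbA' => hxA (show x.rep ∈ A by rw [← hab]; exact A.add_mem ha hbA')
      have haB : a ∉ B := fun haB' => hxB (show x.rep ∈ B by rw [← hab]; exact B.add_mem haB' hb)
      have ha0 : a ≠ 0 := fun hh => haB (hh ▸ B.zero_mem)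
      have hb0 : b ≠ 0 := fun hh => hbA (hh ▸ A.zero_mem)
      have hpaX : Projectivization.mk K a ha0 ∈ X := hAX ((rep_mem_iff ha0).mpr ha)
      have hpbX : Projectivization.mk K b hb0 ∈ X := hBX ((rep_mem_iff hb0).mpr hb)
      obtain ⟨ξ, hξ, hpaξ, hpbξ⟩ := h.mm1 _ hpaX _ hpbX
      have haξ : a ∈ ξ := (rep_mem_iff ha0).mp hpaξ
      have hbξ : b ∈ ξ := (rep_mem_iff hb0).mp hpbξ
      have hUξ : ¬(A ⊓ B ≤ ξ) := by
        intro hU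
        apply hα
        refine ⟨ξ, hξ, ?_, ?_⟩
        · have hAeq := sup_span_eq_of_finrank (inf_le_left : A ⊓ B ≤ A) ha
            (fun hmem => haB hmem.2) (by rw [hA, hAB])
          rw [← hAeq]
          exact sup_le hU (Submodule.span_le.mpr (Set.singleton_subset_iff.mpr haξ))
        · have hBeq := sup_span_eq_of_finrank (inf_le_right : A ⊓ B ≤ B) hb
            (fun hmem => hbA hmem.1) (by rw [hB, hAB])
          rw [← hBeq]
          exact sup_le hU (Submodule.span_le.mpr (Set.singleton_subset_iff.mpr hbξ))
      obtain ⟨c, hcAB, hcξ⟩ := SetLike.not_le_iff_exists.mp hUξ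
      obtain ⟨Q, hnd, -, hset⟩ := h.xi_quadric ξ hξ
      have hQa : Q ⟨a, haξ⟩ = 0 := (quadric_mem hset ha0 haξ).mp hpaX
      have hQb : Q ⟨b, hbξ⟩ = 0 := (quadric_mem hset hb0 hbξ).mp hpbX
      by_cases hpol : QuadraticMap.polar (⇑Q) ⟨a, haξ⟩ ⟨b, hbξ⟩ = 0
      · -- the polar form vanishes: `a + b` is a point of the quadric, hence of `X`.
        have habξ : x.rep ∈ ξ := by rw [← hab]; exact ξ.add_mem haξ hbξ
        have hxsub : (⟨x.rep, habξ⟩ : ↥ξ) = ⟨a, haξ⟩ + ⟨b, hbξ⟩ := Subtype.ext (by simp [← hab])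
        have hQx : Q ⟨x.rep, habξ⟩ = 0 := by
          rw [hxsub]
          have hdef : QuadraticMap.polar (⇑Q) ⟨a, haξ⟩ ⟨b, hbξ⟩ =
              Q (⟨a, haξ⟩ + ⟨b, hbξ⟩) - Q ⟨a, haξ⟩ - Q ⟨b, hbξ⟩ := rfl
          rw [hdef, hQa, hQb] at hpol
          linear_combination hpol
        have hxin : x ∈ {y : ℙ K V | ∃ hh : y.rep ∈ ξ, Q ⟨y.rep, hh⟩ = 0} := ⟨habξ, hQx⟩
        rw [← hset] at hxin
        exact hxin.1
      · -- the polar form does not vanish: contradiction with `c ∉ ξ`.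
        exfalso
        have hcA : c ∈ A := hcAB.1
        have hcB : c ∈ B := hcAB.2
        have hca0 : c + a ≠ 0 := fun hh => haB (by
          rw [eq_neg_of_add_eq_zero_right hh]; exact B.neg_mem hcB)
        have hcb0 : c + b ≠ 0 := fun hh => hbA (by
          rw [eq_neg_of_add_eq_zero_right hh]; exact A.neg_mem hcA)
        have hpcaX : Projectivization.mk K (c + a) hca0 ∈ X :=
          hAX ((rep_mem_iff hca0).mpr (A.add_mem hcA ha))
        have hpcbX : Projectivization.mk K (c + b) hcb0 ∈ X :=
          hBX ((rep_mem_iff hcb0).mpr (B.add_mem hcB hb))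
        obtain ⟨ν, hν, h1, h2⟩ := h.mm1 _ hpcaX _ hpcbX
        have hcaν : c + a ∈ ν := (rep_mem_iff hca0).mp h1
        have hcbν : c + b ∈ ν := (rep_mem_iff hcb0).mp h2
        have habν : a - b ∈ ν := by
          have hsub := ν.sub_mem hcaν hcbν
          have he : (c + a) - (c + b) = a - b := by abel
          rwa [he] at hsub
        have hab2ξ : a - b ∈ ξ := ξ.sub_mem haξ hbξ
        have hab0' : a - b ≠ 0 := sub_ne_zero.mpr fun hh => hbA (hh ▸ ha)
        -- the point of `a - b` is not in `X`
        have hQab : Q (⟨a, haξ⟩ - ⟨b, hbξ⟩) ≠ 0 := by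
          have hd1 : QuadraticMap.polar (⇑Q) ⟨a, haξ⟩ (-⟨b, hbξ⟩) =
              Q (⟨a, haξ⟩ + -⟨b, hbξ⟩) - Q ⟨a, haξ⟩ - Q (-⟨b, hbξ⟩) := rfl
          rw [QuadraticMap.polar_neg_right, QuadraticMap.map_neg, hQa, hQb,
            ← sub_eq_add_neg] at hd1
          intro hzero
          rw [hzero] at hd1
          apply hpol
          linear_combination -hd1
        have hpab_notX : Projectivization.mk K (a - b) hab0' ∉ X := by
          intro hX
          have hq0 := (quadric_mem hset hab0' hab2ξ).mp hX
          apply hQab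
          rwa [show (⟨a - b, hab2ξ⟩ : ↥ξ) = ⟨a, haξ⟩ - ⟨b, hbξ⟩ from Subtype.ext rfl] at hq0
        by_cases hνξ : ν = ξ
        · apply hcξ
          rw [hνξ] at hcaν
          have := ξ.sub_mem hcaν haξ
          rwa [add_sub_cancel_right] at this
        · apply hpab_notX
          apply h.mm2 ν hν ξ hξ hνξ
          exact ⟨(rep_mem_iff hab0').mpr habν, (rep_mem_iff hab0').mpr hab2ξ⟩
  constructor
  · exact main.imp id fun hC => ⟨A ⊔ B, hCdim, hC, le_sup_left, le_sup_right⟩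
  · intro hk
    rcases main with ⟨ξ, hξ, hAξ, -⟩ | hC
    · exfalso
      haveI : FiniteDimensional K ↥ξ :=
        FiniteDimensional.of_finrank_pos (by rw [h.xi_rank ξ hξ]; omega)
      obtain ⟨Q, hnd, -, hset⟩ := h.xi_quadric ξ hξ
      set N : Submodule K ↥ξ := A.comap ξ.subtype with hNdef
      have hNfr : Module.finrank K ↥N = k + 1 := by
        rw [← hA]
        exact (Submodule.comapSubtypeEquivOfLe hAξ).finrank_eq
      have hNiso : ∀ v ∈ N, Q v = 0 := by
        intro v hv
        rcases eq_or_ne v 0 with rfl | hv0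
        · exact QuadraticMap.map_zero Q
        · have hv0' : (v : V) ≠ 0 := fun hh => hv0 (Subtype.ext hh)
          have hvA : (v : V) ∈ A := hv
          have hX : Projectivization.mk K (v : V) hv0' ∈ X := hAX ((rep_mem_iff hv0').mpr hvA)
          have hq0 := (quadric_mem hset hv0' v.2).mp hX
          rwa [show (⟨(v : V), v.2⟩ : ↥ξ) = v from Subtype.ext rfl] at hq0
      have hbound := isotropic_finrank_bound Q hnd N hNiso
      rw [hNfr, h.xi_rank ξ hξ] at hbound
      omega
    · exact ⟨A ⊔ B, hCdim, hC, le_sup_left, le_sup_right⟩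

end MMset
end

section
/- Let (X,Ξ) be a pre-Mazzocca-Melone set of split type d. Every singular k-space with k ≤ ⌊d/2⌋ which is contained in a finite-dimensional maximal singular subspace is contained in a symp. -/
/-!
Formalization of definitions from "On the varieties of the second row of the
split Freudenthal-Tits Magic Square" by Schillewaert and Van Maldeghem.

Points of the projective space `P(V)` are elements of `ℙ K V`; projective
subspaces are represented by linear subspaces (`Submodule K V`), so a projective
`k`-space corresponds to a submodule of linear dimension `k + 1`.
-/

open scoped LinearAlgebra.Projectivization
open Projectivization Module

namespace MMset

open scoped LinearAlgebra.Projectivization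
open Projectivization Module

section Aux

variable {K : Type*} [Field K] {V : Type*} [AddCommGroup V] [Module K V]

/-- The chosen representative of `mk v` is a scalar multiple of `v`. -/
lemma exists_rep_smul (v : V) (hv : v ≠ 0) :
    ∃ c : Kˣ, (Projectivization.mk K v hv).rep = (c : K) • v := by
  obtain ⟨a, ha⟩ := (Projectivization.mk_eq_mk_iff K _ _
    (Projectivization.rep_nonzero (Projectivization.mk K v hv)) hv).mp
    (Projectivization.mk_rep (Projectivization.mk K v hv))
  exact ⟨a, ha.symm⟩

lemma eq_of_rep_smul {x y : ℙ K V} {c : K} (h : y.rep = c • x.rep) : x = y := by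
  have hc : c ≠ 0 := by
    rintro rfl
    exact (Projectivization.rep_nonzero y) (by simpa using h)
  have h1 : Projectivization.mk K y.rep (Projectivization.rep_nonzero y)
      = Projectivization.mk K x.rep (Projectivization.rep_nonzero x) :=
    (Projectivization.mk_eq_mk_iff K _ _ _ _).mpr ⟨Units.mk0 c hc, h.symm⟩
  rw [Projectivization.mk_rep, Projectivization.mk_rep] at h1
  exact h1.symm

lemma pair_indep {x y : ℙ K V} (h : x ≠ y) : LinearIndependent K ![x.rep, y.rep] := by
  rw [LinearIndependent.pair_iff]
  intro s t hst
  by_cases ht : t = 0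
  · subst ht
    simp only [smul_zero, zero_smul, add_zero] at hst
    rcases smul_eq_zero.mp hst with hs | h0
    · exact ⟨hs, rfl⟩
    · exact absurd h0 (Projectivization.rep_nonzero x)
  · exfalso
    have h6 : t • y.rep = (-s) • x.rep := by
      rw [neg_smul, eq_neg_iff_add_eq_zero, add_comm]
      exact hst
    have h5 : y.rep = (t⁻¹ * (-s)) • x.rep := by
      calc y.rep = (t⁻¹ * t) • y.rep := by rw [inv_mul_cancel₀ ht, one_smul]
        _ = t⁻¹ • (t • y.rep) := by rw [mul_smul]
        _ = t⁻¹ • ((-s) • x.rep) := by rw [h6]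
        _ = (t⁻¹ * (-s)) • x.rep := by rw [mul_smul]
    exact h (eq_of_rep_smul h5)

omit [AddCommGroup V] in
lemma range_pair {W : Type*} (a b : W) : Set.range ![a, b] = {a, b} := by
  ext x
  constructor
  · rintro ⟨i, rfl⟩
    fin_cases i <;> simp
  · rintro (rfl | rfl)
    · exact ⟨0, rfl⟩
    · exact ⟨1, rfl⟩

lemma finrank_span_pair {a b : V} (hli : LinearIndependent K ![a, b]) :
    Module.finrank K ↥(Submodule.span K {a, b}) = 2 := by
  rw [show ({a, b} : Set V) = Set.range ![a, b] from (range_pair a b).symm,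
    finrank_span_eq_card hli]
  simp

/-- If all projective points of `W` have representatives in `ξ`, then `W ≤ ξ`. -/
lemma le_of_points {W ξ : Submodule K V} (hW : ∀ p ∈ projPts W, p.rep ∈ ξ) : W ≤ ξ := by
  intro v hv
  rcases eq_or_ne v 0 with rfl | hv0
  · exact ξ.zero_mem
  obtain ⟨c, hc⟩ := exists_rep_smul (K := K) v hv0
  have hp : (Projectivization.mk K v hv0) ∈ projPts W := by
    show (Projectivization.mk K v hv0).rep ∈ W
    rw [hc]; exact W.smul_mem _ hv
  have h1 := hW _ hp
  rw [hc] at h1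
  have h2 := ξ.smul_mem ((c : K)⁻¹) h1
  rwa [inv_smul_smul₀ (Units.ne_zero c)] at h2

lemma projPts_mono {W W' : Submodule K V} (h : W ≤ W') : projPts W ⊆ projPts W' :=
  fun _ hp => h hp

lemma XCollinear_comm {X : Set (ℙ K V)} {x y : ℙ K V} (h : XCollinear X x y) :
    XCollinear X y x := by
  obtain ⟨hx, hy, L, hL, h1, h2⟩ := h
  exact ⟨hy, hx, L, hL, h2, h1⟩

/-- Expansion of a quadratic form on a linear combination. -/
lemma Qexp {E : Type*} [AddCommGroup E] [Module K E] (Q : QuadraticForm K E)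
    (a b : E) (s t : K) :
    Q (s • a + t • b) = s * s * Q a + t * t * Q b + (s * t) * QuadraticMap.polar Q a b := by
  have h1 : QuadraticMap.polar (⇑Q) (s • a) (t • b) = Q (s • a + t • b) - Q (s • a) - Q (t • b) :=
    rfl
  have h2 : QuadraticMap.polar (⇑Q) (s • a) (t • b)
      = (s * t) * QuadraticMap.polar (⇑Q) a b := by
    rw [QuadraticMap.polar_smul_left, QuadraticMap.polar_smul_right]
    rw [smul_eq_mul, smul_eq_mul]; ring
  have h3 : Q (s • a) = s * s * Q a := by rw [QuadraticMap.map_smul, smul_eq_mul]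
  have h4 : Q (t • b) = t * t * Q b := by rw [QuadraticMap.map_smul, smul_eq_mul]
  rw [h2, h3, h4] at h1
  linear_combination -h1

lemma Qsub {E : Type*} [AddCommGroup E] [Module K E] (Q : QuadraticForm K E) (a b : E) :
    Q (a - b) = Q a + Q b - QuadraticMap.polar Q a b := by
  have h := Qexp Q a b 1 (-1)
  simp only [one_smul, neg_smul, one_mul, neg_mul, neg_neg, mul_one] at h
  rw [sub_eq_add_neg, h]; ring

section Quadric

variable {X : Set (ℙ K V)} {ζ : Submodule K V} {Q : QuadraticForm K ↥ζ}

/-- Membership in `X` via the quadric equation. -/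
lemma Q_of_mem (hS : X ∩ projPts ζ = {p : ℙ K V | ∃ h : p.rep ∈ ζ, Q ⟨p.rep, h⟩ = 0})
    {p : ℙ K V} (hpX : p ∈ X) (hpζ : p.rep ∈ ζ) : Q ⟨p.rep, hpζ⟩ = 0 := by
  have h1 : p ∈ X ∩ projPts ζ := ⟨hpX, hpζ⟩
  rw [hS] at h1
  obtain ⟨h', hq⟩ := h1
  convert hq using 2

lemma mem_X_of_Q (hS : X ∩ projPts ζ = {p : ℙ K V | ∃ h : p.rep ∈ ζ, Q ⟨p.rep, h⟩ = 0})
    {a : ↥ζ} (ha : (a : V) ≠ 0) (hQ : Q a = 0) :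
    Projectivization.mk K (a : V) ha ∈ X := by
  obtain ⟨c, hc⟩ := exists_rep_smul (K := K) (a : V) ha
  have hrep : (Projectivization.mk K (a : V) ha).rep ∈ ζ := by
    rw [hc]; exact ζ.smul_mem _ a.2
  have hmem : Projectivization.mk K (a : V) ha ∈ X ∩ projPts ζ := by
    rw [hS]
    refine ⟨hrep, ?_⟩
    have he : (⟨(Projectivization.mk K (a : V) ha).rep, hrep⟩ : ↥ζ) = (c : K) • a := by
      apply Subtype.ext; simpa using hc
    rw [he, QuadraticMap.map_smul, hQ, smul_eq_mul, mul_zero]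
  exact hmem.1

lemma rep_smul_subtype {a : ↥ζ} (ha : (a : V) ≠ 0) :
    ∃ c : Kˣ, ∀ (hrep : (Projectivization.mk K (a : V) ha).rep ∈ ζ),
      (⟨(Projectivization.mk K (a : V) ha).rep, hrep⟩ : ↥ζ) = (c : K) • a := by
  obtain ⟨c, hc⟩ := exists_rep_smul (K := K) (a : V) ha
  exact ⟨c, fun hrep => by apply Subtype.ext; simpa using hc⟩

/-- Two quadric points with vanishing polar form are `X`-collinear (if distinct). -/
lemma collinear_of_polar (hS : X ∩ projPts ζ = {p : ℙ K V | ∃ h : p.rep ∈ ζ, Q ⟨p.rep, h⟩ = 0})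
    {a b : ↥ζ} (ha : (a : V) ≠ 0) (hb : (b : V) ≠ 0) (hQa : Q a = 0) (hQb : Q b = 0)
    (hpol : QuadraticMap.polar Q a b = 0)
    (hne : Projectivization.mk K (a : V) ha ≠ Projectivization.mk K (b : V) hb) :
    XCollinear X (Projectivization.mk K (a : V) ha) (Projectivization.mk K (b : V) hb) := by
  set xa := Projectivization.mk K (a : V) ha with hxa
  set xb := Projectivization.mk K (b : V) hb with hxb
  have haX : xa ∈ X := mem_X_of_Q hS ha hQa
  have hbX : xb ∈ X := mem_X_of_Q hS hb hQb
  refine ⟨haX, hbX, Submodule.span K {(a : V), (b : V)}, ⟨?_, ?_⟩, ?_, ?_⟩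
  · -- finrank = 2
    apply finrank_span_pair
    rw [LinearIndependent.pair_iff]
    intro s t hst
    have hst' : s • a + t • b = 0 := by
      apply Subtype.ext_iff.mpr; push_cast; exact hst
    by_cases ht : t = 0
    · subst ht
      constructor
      · have : s • a = 0 := by simpa using hst'
        rcases smul_eq_zero.mp this with hs | h0
        · exact hs
        · exact absurd (congrArg Subtype.val h0) ha
      · rfl
    · exfalso
      have hba : b = (-(s/t)) • a := by
        have : t • b = -(s • a) := by
          rw [eq_neg_iff_add_eq_zero, add_comm]; exact hst'
        calc b = (t⁻¹ * t) • b := by rw [inv_mul_cancel₀ ht, one_smul]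
          _ = t⁻¹ • (t • b) := by rw [mul_smul]
          _ = t⁻¹ • (-(s • a)) := by rw [this]
          _ = (-(s/t)) • a := by rw [smul_neg, ← mul_smul, ← neg_smul]; ring_nf
      apply hne
      have : (b : V) = (-(s/t)) • (a : V) := by
        rw [hba]; push_cast; rfl
      have hne0 : (-(s/t)) ≠ 0 := by
        intro h0
        rw [h0, zero_smul] at hba
        exact hb (by rw [hba]; rfl)
      rw [Projectivization.mk_eq_mk_iff]
      have hab : (a : V) = (-(s/t))⁻¹ • (b : V) := by
        rw [this, inv_smul_smul₀ hne0]
      exact ⟨Units.mk0 ((-(s/t))⁻¹) (inv_ne_zero hne0), by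
        rw [Units.smul_def, Units.val_mk0]; exact hab.symm⟩
  · -- all points in X
    intro w hw
    have hwmem : w.rep ∈ Submodule.span K {(a : V), (b : V)} := hw
    obtain ⟨s, t, hst⟩ := Submodule.mem_span_pair.mp hwmem
    have hwζ : w.rep ∈ ζ := by
      rw [← hst]; exact ζ.add_mem (ζ.smul_mem _ a.2) (ζ.smul_mem _ b.2)
    have hsub : (⟨w.rep, hwζ⟩ : ↥ζ) = s • a + t • b := by
      apply Subtype.ext; push_cast; exact hst.symm
    have hQw : Q ⟨w.rep, hwζ⟩ = 0 := by
      rw [hsub, Qexp, hQa, hQb, hpol]; ring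
    have : w ∈ X ∩ projPts ζ := by rw [hS]; exact ⟨hwζ, hQw⟩
    exact this.1
  · obtain ⟨c, hc⟩ := exists_rep_smul (K := K) (a : V) ha
    rw [hc]
    exact Submodule.smul_mem _ _ (Submodule.subset_span (Set.mem_insert _ _))
  · obtain ⟨c, hc⟩ := exists_rep_smul (K := K) (b : V) hb
    rw [hc]
    exact Submodule.smul_mem _ _ (Submodule.subset_span (Set.mem_insert_of_mem _ rfl))

/-- Two quadric points with non-vanishing polar form are distinct and non-collinear. -/
lemma not_collinear_of_polar
    (hS : X ∩ projPts ζ = {p : ℙ K V | ∃ h : p.rep ∈ ζ, Q ⟨p.rep, h⟩ = 0})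
    {a b : ↥ζ} (ha : (a : V) ≠ 0) (hb : (b : V) ≠ 0) (hQa : Q a = 0) (hQb : Q b = 0)
    (hpol : QuadraticMap.polar Q a b ≠ 0) :
    ¬ XCollinear X (Projectivization.mk K (a : V) ha) (Projectivization.mk K (b : V) hb) ∧
      Projectivization.mk K (a : V) ha ≠ Projectivization.mk K (b : V) hb := by
  constructor
  · rintro ⟨-, -, L, ⟨hL2, hLX⟩, haL, hbL⟩
    -- the vector a + b lies in L
    obtain ⟨ca, hca⟩ := exists_rep_smul (K := K) (a : V) ha
    obtain ⟨cb, hcb⟩ := exists_rep_smul (K := K) (b : V) hb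
    have haL' : (a : V) ∈ L := by
      have := L.smul_mem ((ca : K)⁻¹) haL
      rw [hca, inv_smul_smul₀ (Units.ne_zero ca)] at this
      exact this
    have hbL' : (b : V) ∈ L := by
      have := L.smul_mem ((cb : K)⁻¹) hbL
      rw [hcb, inv_smul_smul₀ (Units.ne_zero cb)] at this
      exact this
    have habne : (a : V) + (b : V) ≠ 0 := by
      intro h0
      have hab : b = -a := by
        apply Subtype.ext
        push_cast
        rw [eq_neg_iff_add_eq_zero, add_comm]; exact h0
      apply hpol
      rw [hab]
      have : QuadraticMap.polar (⇑Q) a (-a) = - QuadraticMap.polar (⇑Q) a a :=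
        QuadraticMap.polar_neg_right _ _ _
      rw [this, QuadraticMap.polar_self, hQa]
      simp
    have hw : Projectivization.mk K ((a : V) + (b : V)) habne ∈ projPts L := by
      obtain ⟨c, hc⟩ := exists_rep_smul (K := K) ((a : V) + (b : V)) habne
      show _ ∈ L
      rw [hc]
      exact L.smul_mem _ (L.add_mem haL' hbL')
    have hwX : Projectivization.mk K ((a : V) + (b : V)) habne ∈ X := hLX hw
    have hwζ : (Projectivization.mk K ((a : V) + (b : V)) habne).rep ∈ ζ := by
      obtain ⟨c, hc⟩ := exists_rep_smul (K := K) ((a : V) + (b : V)) habne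
      rw [hc]
      exact ζ.smul_mem _ (ζ.add_mem a.2 b.2)
    have hQw := Q_of_mem hS hwX hwζ
    obtain ⟨c, hc⟩ := exists_rep_smul (K := K) ((a : V) + (b : V)) habne
    have he : (⟨(Projectivization.mk K ((a : V) + (b : V)) habne).rep, hwζ⟩ : ↥ζ)
        = (c : K) • (a + b) := by
      apply Subtype.ext; push_cast; simpa using hc
    rw [he, QuadraticMap.map_smul, smul_eq_mul] at hQw
    have hQab : Q (a + b) = 0 := by
      rcases mul_eq_zero.mp hQw with h0 | h0
      · exact absurd h0 (mul_ne_zero c.ne_zero c.ne_zero)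
      · exact h0
    apply hpol
    have hthis : Q (a + b) = Q a + Q b + QuadraticMap.polar Q a b := by
      have := Qexp Q a b 1 1
      simpa using this
    rw [hQab, hQa, hQb] at hthis
    linear_combination -hthis
  · intro heq
    rw [Projectivization.mk_eq_mk_iff] at heq
    obtain ⟨u, hu⟩ := heq
    have hab : a = (u : K) • b := by
      apply Subtype.ext; push_cast; exact hu.symm
    apply hpol
    rw [hab, QuadraticMap.polar_smul_left, QuadraticMap.polar_self, hQb]
    simp

end Quadric

section LemB

variable {d : ℕ} {W : Submodule K V} {X : Set (ℙ K V)} {Xi : Set (Submodule K V)}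

/-- Key lemma: a point collinear with two non-collinear points `x, y` lies in
every symp containing `x` and `y`. -/
lemma lemB (h : IsPreMM d W X Xi) {x y z : ℙ K V}
    (hxy : ¬ XCollinear X x y) (hxyne : x ≠ y)
    (hzx : XCollinear X z x) (hzy : XCollinear X z y)
    (hzxne : z ≠ x) (hzyne : z ≠ y)
    {ξ : Submodule K V} (hξ : ξ ∈ Xi) (hxξ : x.rep ∈ ξ) (hyξ : y.rep ∈ ξ) :
    z.rep ∈ ξ := by
  by_contra hzξ
  obtain ⟨hzX, hxX, L1, ⟨hL1fr, hL1X⟩, hzL1, hxL1⟩ := hzx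
  obtain ⟨-, hyX, L2, ⟨hL2fr, hL2X⟩, hzL2, hyL2⟩ := hzy
  haveI : FiniteDimensional K ↥L1 := FiniteDimensional.of_finrank_pos (by rw [hL1fr]; norm_num)
  haveI : FiniteDimensional K ↥L2 := FiniteDimensional.of_finrank_pos (by rw [hL2fr]; norm_num)
  -- z is not on the line through x and y
  have hzL0 : z.rep ∉ Submodule.span K {x.rep, y.rep} := by
    intro hmem
    have h1 : Submodule.span K {x.rep, z.rep} ≤ L1 := by
      rw [Submodule.span_le]
      rintro v (rfl | rfl)
      · exact hxL1
      · exact hzL1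
    have hfr1 : Module.finrank K ↥(Submodule.span K {x.rep, z.rep}) = 2 :=
      finrank_span_pair (pair_indep (Ne.symm hzxne))
    have he1 : Submodule.span K {x.rep, z.rep} = L1 :=
      Submodule.eq_of_le_of_finrank_eq h1 (by rw [hfr1, hL1fr])
    have h2 : Submodule.span K {x.rep, z.rep} ≤ Submodule.span K {x.rep, y.rep} := by
      rw [Submodule.span_le]
      rintro v (rfl | rfl)
      · exact Submodule.subset_span (Set.mem_insert _ _)
      · exact hmem
    have hfr0 : Module.finrank K ↥(Submodule.span K {x.rep, y.rep}) = 2 :=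
      finrank_span_pair (pair_indep hxyne)
    haveI : FiniteDimensional K ↥(Submodule.span K {x.rep, y.rep}) :=
      FiniteDimensional.of_finrank_pos (by rw [hfr0]; norm_num)
    have he2 : Submodule.span K {x.rep, z.rep} = Submodule.span K {x.rep, y.rep} :=
      Submodule.eq_of_le_of_finrank_eq h2 (by rw [hfr1, hfr0])
    apply hxy
    refine ⟨hxX, hyX, L1, ⟨hL1fr, hL1X⟩, hxL1, ?_⟩
    rw [← he1, he2]
    exact Submodule.subset_span (Set.mem_insert_of_mem _ rfl)
  -- auxiliary points u = x + z , v = y + z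
  have hxzne : x.rep + z.rep ≠ 0 := by
    intro h0
    apply hzL0
    have : z.rep = (-1 : K) • x.rep := by
      rw [neg_smul, one_smul, eq_neg_iff_add_eq_zero, add_comm]; exact h0
    rw [this]
    exact Submodule.smul_mem _ _ (Submodule.subset_span (Set.mem_insert _ _))
  have hyzne : y.rep + z.rep ≠ 0 := by
    intro h0
    apply hzL0
    have : z.rep = (-1 : K) • y.rep := by
      rw [neg_smul, one_smul, eq_neg_iff_add_eq_zero, add_comm]; exact h0
    rw [this]
    exact Submodule.smul_mem _ _ (Submodule.subset_span (Set.mem_insert_of_mem _ rfl))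
  set u := Projectivization.mk K (x.rep + z.rep) hxzne with hu
  set v := Projectivization.mk K (y.rep + z.rep) hyzne with hv
  have huX : u ∈ X := by
    apply hL1X
    obtain ⟨c, hc⟩ := exists_rep_smul (K := K) (x.rep + z.rep) hxzne
    show u.rep ∈ L1
    rw [hc]
    exact L1.smul_mem _ (L1.add_mem hxL1 hzL1)
  have hvX : v ∈ X := by
    apply hL2X
    obtain ⟨c, hc⟩ := exists_rep_smul (K := K) (y.rep + z.rep) hyzne
    show v.rep ∈ L2
    rw [hc]
    exact L2.smul_mem _ (L2.add_mem hyL2 hzL2)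
  have huvne : u ≠ v := by
    intro heq
    rw [Projectivization.mk_eq_mk_iff] at heq
    obtain ⟨a, hA⟩ := heq
    rw [Units.smul_def] at hA
    by_cases ha1 : (a : K) = 1
    · rw [ha1, one_smul] at hA
      have hxyrep : y.rep = x.rep := by
        have h9 := congrArg (fun w => w - z.rep) hA
        simpa using h9
      exact hxyne (by
        have h1 := Projectivization.mk_rep x
        have h2 := Projectivization.mk_rep y
        rw [← h1, ← h2]
        congr 1
        exact hxyrep.symm)
    · apply hzL0
      have hz : ((a : K) - 1) • z.rep = x.rep - (a : K) • y.rep := by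
        have : (a : K) • y.rep + (a : K) • z.rep = x.rep + z.rep := by
          rw [← smul_add]; exact hA
        have h3 : (a : K) • z.rep - z.rep = x.rep - (a : K) • y.rep := by
          linear_combination (norm := module) this
        rw [sub_smul, one_smul]
        exact h3
      have hne1 : (a : K) - 1 ≠ 0 := fun h0 => ha1 (sub_eq_zero.mp h0)
      have : z.rep = ((a : K) - 1)⁻¹ • (x.rep - (a : K) • y.rep) := by
        rw [← hz, inv_smul_smul₀ hne1]
      rw [this]
      apply Submodule.smul_mem
      apply Submodule.sub_mem
      · exact Submodule.subset_span (Set.mem_insert _ _)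
      · exact Submodule.smul_mem _ _
          (Submodule.subset_span (Set.mem_insert_of_mem _ rfl))
  obtain ⟨ξ', hξ', huξ', hvξ'⟩ := h.mm1 u huX v hvX
  have hxzξ' : x.rep + z.rep ∈ ξ' := by
    obtain ⟨c, hc⟩ := exists_rep_smul (K := K) (x.rep + z.rep) hxzne
    have := ξ'.smul_mem ((c : K)⁻¹) (by rw [← hc]; exact huξ' : (c : K) • (x.rep + z.rep) ∈ ξ')
    rwa [inv_smul_smul₀ (Units.ne_zero c)] at this
  have hyzξ' : y.rep + z.rep ∈ ξ' := by
    obtain ⟨c, hc⟩ := exists_rep_smul (K := K) (y.rep + z.rep) hyzne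
    have := ξ'.smul_mem ((c : K)⁻¹) (by rw [← hc]; exact hvξ' : (c : K) • (y.rep + z.rep) ∈ ξ')
    rwa [inv_smul_smul₀ (Units.ne_zero c)] at this
  have hξne : ξ ≠ ξ' := by
    rintro rfl
    exact hzξ (by
      have := ξ.sub_mem hxzξ' hxξ
      simpa using this)
  -- MM2 : the point x - y is in X
  have hmne : x.rep - y.rep ≠ 0 := by
    intro h0
    apply hxyne
    have : x.rep = y.rep := by
      have := sub_eq_zero.mp h0; exact this
    have h1 := Projectivization.mk_rep x
    have h2 := Projectivization.mk_rep y
    rw [← h1, ← h2]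
    congr 1
  have hmξ : x.rep - y.rep ∈ ξ := ξ.sub_mem hxξ hyξ
  have hmξ' : x.rep - y.rep ∈ ξ' := by
    have := ξ'.sub_mem hxzξ' hyzξ'
    simpa using this
  have hPX : Projectivization.mk K (x.rep - y.rep) hmne ∈ X := by
    apply h.mm2 ξ hξ ξ' hξ' hξne
    obtain ⟨c, hc⟩ := exists_rep_smul (K := K) (x.rep - y.rep) hmne
    show _ ∈ ξ ⊓ ξ'
    rw [hc]
    exact Submodule.smul_mem _ _ (Submodule.mem_inf.mpr ⟨hmξ, hmξ'⟩)
  -- quadric of ξ : deduce polar(x,y) = 0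
  obtain ⟨Q, hnd, -, hS⟩ := h.xi_quadric ξ hξ
  have hQx : Q ⟨x.rep, hxξ⟩ = 0 := Q_of_mem hS hxX hxξ
  have hQy : Q ⟨y.rep, hyξ⟩ = 0 := Q_of_mem hS hyX hyξ
  have hPζ : (Projectivization.mk K (x.rep - y.rep) hmne).rep ∈ ξ := by
    obtain ⟨c, hc⟩ := exists_rep_smul (K := K) (x.rep - y.rep) hmne
    rw [hc]
    exact ξ.smul_mem _ hmξ
  have hQP := Q_of_mem hS hPX hPζ
  obtain ⟨c, hc⟩ := exists_rep_smul (K := K) (x.rep - y.rep) hmne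
  have he : (⟨(Projectivization.mk K (x.rep - y.rep) hmne).rep, hPζ⟩ : ↥ξ)
      = (c : K) • (⟨x.rep, hxξ⟩ - ⟨y.rep, hyξ⟩) := by
    apply Subtype.ext; push_cast; simpa using hc
  rw [he, QuadraticMap.map_smul, smul_eq_mul] at hQP
  have hQsub : Q (⟨x.rep, hxξ⟩ - ⟨y.rep, hyξ⟩) = 0 := by
    rcases mul_eq_zero.mp hQP with h0 | h0
    · exact absurd h0 (mul_ne_zero c.ne_zero c.ne_zero)
    · exact h0
  have hpol : QuadraticMap.polar Q ⟨x.rep, hxξ⟩ ⟨y.rep, hyξ⟩ = 0 := by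
    have := Qsub Q ⟨x.rep, hxξ⟩ ⟨y.rep, hyξ⟩
    rw [hQsub, hQx, hQy] at this
    linear_combination this
  -- hence x and y are collinear : contradiction
  apply hxy
  have hcol := collinear_of_polar hS
    (a := ⟨x.rep, hxξ⟩) (b := ⟨y.rep, hyξ⟩)
    (Projectivization.rep_nonzero x) (Projectivization.rep_nonzero y)
    hQx hQy hpol (by
      rw [Projectivization.mk_rep, Projectivization.mk_rep]
      exact hxyne)
  rw [Projectivization.mk_rep, Projectivization.mk_rep] at hcol
  exact hcol

end LemB

section Claims

variable {E : Type*} [AddCommGroup E] [Module K E]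

/-- There exists a singular vector perpendicular to the totally singular subspace `B'`
but not contained in it, provided `B'` is smaller than a totally singular `U`. -/
lemma exists_singular_perp [FiniteDimensional K E] (Q : QuadraticForm K E)
    (U B' : Submodule K E) (hU : ∀ u ∈ U, Q u = 0) (hB : ∀ b ∈ B', Q b = 0)
    (hlt : Module.finrank K ↥B' < Module.finrank K ↥U) :
    ∃ u0 : E, Q u0 = 0 ∧ (∀ b ∈ B', QuadraticMap.polar Q u0 b = 0) ∧ u0 ∉ B' := by
  have hts : ∀ (S : Submodule K E), (∀ s ∈ S, Q s = 0) →
      ∀ a b, a ∈ S → b ∈ S → QuadraticMap.polar Q a b = 0 := by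
    intro S hS a b haS hbS
    have : QuadraticMap.polar (⇑Q) a b = Q (a + b) - Q a - Q b := rfl
    rw [this, hS _ (S.add_mem haS hbS), hS _ haS, hS _ hbS]
    ring
  by_contra hcon
  push_neg at hcon
  set φ : E →ₗ[K] Module.Dual K ↥B' :=
    (QuadraticMap.polarBilin Q).compl₂ B'.subtype with hφ
  have hφ_apply : ∀ (w : E) (b : ↥B'), φ w b = QuadraticMap.polar Q w (b : E) := by
    intro w b; rfl
  set ψ : ↥U →ₗ[K] Module.Dual K ↥B' := φ.comp U.subtype with hψ
  have hψ_apply : ∀ (u : ↥U) (b : ↥B'), ψ u b = QuadraticMap.polar Q (u : E) (b : E) := by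
    intro u b; rfl
  set NU : Submodule K ↥U := Submodule.comap U.subtype B' with hNU
  set NB : Submodule K ↥B' := Submodule.comap B'.subtype U with hNB
  have hker : LinearMap.ker ψ = NU := by
    apply le_antisymm
    · intro u hu
      have h0 : ∀ b ∈ B', QuadraticMap.polar Q (u : E) b = 0 := by
        intro b hb
        have := congrArg (fun f => f ⟨b, hb⟩) (LinearMap.mem_ker.mp hu)
        simpa [hψ_apply] using this
      exact hcon (u : E) (hU _ u.2) h0
    · intro u hu
      apply LinearMap.mem_ker.mpr
      apply LinearMap.ext
      intro b
      rw [hψ_apply]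
      exact hts B' hB _ _ hu b.2
  have hrange : LinearMap.range ψ ≤ NB.dualAnnihilator := by
    rintro f ⟨u, rfl⟩
    rw [Submodule.mem_dualAnnihilator]
    intro b hb
    rw [hψ_apply]
    exact hts U hU _ _ u.2 hb
  -- dimension count
  have e0 : Module.finrank K ↥NU = Module.finrank K ↥NB := by
    have h1 : NU = Submodule.comap U.subtype (U ⊓ B') := by
      ext u; simp [hNU, u.2]
    have h2 : NB = Submodule.comap B'.subtype (U ⊓ B') := by
      ext b; simp [hNB, b.2, and_comm]
    have h3 := LinearEquiv.finrank_eq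
      (Submodule.comapSubtypeEquivOfLe (inf_le_left : U ⊓ B' ≤ U)) (R := K)
    have h4 := LinearEquiv.finrank_eq
      (Submodule.comapSubtypeEquivOfLe (inf_le_right : U ⊓ B' ≤ B')) (R := K)
    rw [h1, h2, h3, h4]
  have e1 : Module.finrank K (↥B' ⧸ NB) = Module.finrank K ↥NB.dualAnnihilator :=
    LinearEquiv.finrank_eq (Subspace.quotEquivAnnihilator NB)
  have e2 : Module.finrank K (↥B' ⧸ NB) + Module.finrank K ↥NB = Module.finrank K ↥B' :=
    Submodule.finrank_quotient_add_finrank NB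
  have e3 : Module.finrank K ↥(LinearMap.range ψ) ≤ Module.finrank K ↥NB.dualAnnihilator :=
    Submodule.finrank_mono hrange
  have e4 : Module.finrank K ↥(LinearMap.range ψ) + Module.finrank K ↥(LinearMap.ker ψ)
      = Module.finrank K ↥U := LinearMap.finrank_range_add_finrank_ker ψ
  rw [hker] at e4
  omega
/-- Given a singular vector `u0` perpendicular to the totally singular `B'` but not in
it, there is a singular vector `v2` perpendicular to `B'` with `polar u0 v2 ≠ 0`. -/
lemma exists_polar_partner [FiniteDimensional K E] (Q : QuadraticForm K E)
    (hnd : ∀ v : E, Q v = 0 → (∀ w, QuadraticMap.polar Q v w = 0) → v = 0)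
    (B' : Submodule K E) (hB : ∀ b ∈ B', Q b = 0)
    (u0 : E) (hu0 : Q u0 = 0) (hperp : ∀ b ∈ B', QuadraticMap.polar Q u0 b = 0)
    (hu0B : u0 ∉ B') :
    ∃ v2 : E, Q v2 = 0 ∧ (∀ b ∈ B', QuadraticMap.polar Q v2 b = 0) ∧
      QuadraticMap.polar Q u0 v2 ≠ 0 := by
  set φ : E →ₗ[K] Module.Dual K ↥B' :=
    (QuadraticMap.polarBilin Q).compl₂ B'.subtype with hφ
  have hφ_apply : ∀ (w : E) (b : ↥B'), φ w b = QuadraticMap.polar Q w (b : E) := by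
    intro w b; rfl
  have hv1 : ∃ v1 ∈ LinearMap.ker φ, QuadraticMap.polar Q u0 v1 ≠ 0 := by
    by_contra hcon
    push_neg at hcon
    set f : E →ₗ[K] K := QuadraticMap.polarBilin Q u0 with hf
    have hf_apply : ∀ w, f w = QuadraticMap.polar Q u0 w := by intro w; rfl
    have hker : LinearMap.ker φ ≤ LinearMap.ker f := by
      intro w hw
      rw [LinearMap.mem_ker, hf_apply]
      exact hcon w hw
    set φbar := (LinearMap.ker φ).liftQ φ le_rfl with hφbar
    have hinj : LinearMap.ker φbar = ⊥ := Submodule.ker_liftQ_eq_bot _ _ _ le_rfl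
    obtain ⟨ℓ, hℓ⟩ := φbar.exists_leftInverse_of_injective hinj
    set fbar := (LinearMap.ker φ).liftQ f hker with hfbar
    set g : Module.Dual K (Module.Dual K ↥B') := fbar.comp ℓ with hg
    obtain ⟨b0, hb0⟩ := (Module.evalEquiv K ↥B').surjective g
    have hkey : ∀ w : E, QuadraticMap.polar Q u0 w = QuadraticMap.polar Q (b0 : E) w := by
      intro w
      have h1 : f w = fbar ((LinearMap.ker φ).mkQ w) := (Submodule.liftQ_apply _ _ _).symm
      have h2 : (ℓ.comp φbar) ((LinearMap.ker φ).mkQ w) = (LinearMap.ker φ).mkQ w := by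
        rw [hℓ]; rfl
      have h3 : fbar ((LinearMap.ker φ).mkQ w) = g (φbar ((LinearMap.ker φ).mkQ w)) := by
        rw [hg]
        show fbar _ = fbar (ℓ (φbar _))
        rw [show ℓ (φbar ((LinearMap.ker φ).mkQ w)) = (ℓ.comp φbar) ((LinearMap.ker φ).mkQ w)
          from rfl, h2]
      have h4 : φbar ((LinearMap.ker φ).mkQ w) = φ w := Submodule.liftQ_apply _ _ _
      have h5 : g (φ w) = (φ w) b0 := by
        rw [← hb0, Module.evalEquiv_apply, Module.Dual.eval_apply]
      calc QuadraticMap.polar Q u0 w = f w := (hf_apply w).symm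
        _ = fbar ((LinearMap.ker φ).mkQ w) := h1
        _ = g (φbar ((LinearMap.ker φ).mkQ w)) := h3
        _ = g (φ w) := by rw [h4]
        _ = (φ w) b0 := h5
        _ = QuadraticMap.polar Q w (b0 : E) := hφ_apply w b0
        _ = QuadraticMap.polar Q (b0 : E) w := QuadraticMap.polar_comm _ _ _
    have hr : ∀ w, QuadraticMap.polar Q (u0 - (b0 : E)) w = 0 := by
      intro w
      rw [QuadraticMap.polar_sub_left, hkey w]
      ring
    have hQr : Q (u0 - (b0 : E)) = 0 := by
      rw [Qsub, hu0, hB _ b0.2, hperp _ b0.2]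
      ring
    have h0 := hnd _ hQr hr
    apply hu0B
    have he : u0 = (b0 : E) := by rwa [sub_eq_zero] at h0
    rw [he]
    exact b0.2
  obtain ⟨v1, hv1ker, hp⟩ := hv1
  have hv1perp : ∀ b ∈ B', QuadraticMap.polar Q v1 b = 0 := by
    intro b hb
    have h6 := congrArg (fun f => f ⟨b, hb⟩) (LinearMap.mem_ker.mp hv1ker)
    simpa [hφ_apply] using h6
  set p := QuadraticMap.polar Q u0 v1 with hpdef
  set t : K := -(Q v1) / p with ht
  have htp : t * p = -(Q v1) := by
    rw [ht]; field_simp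
  refine ⟨v1 + t • u0, ?_, ?_, ?_⟩
  · have h7 : Q ((1 : K) • v1 + t • u0)
        = 1 * 1 * Q v1 + t * t * Q u0 + (1 * t) * QuadraticMap.polar Q v1 u0 := Qexp Q v1 u0 1 t
    rw [one_smul] at h7
    rw [h7, hu0, QuadraticMap.polar_comm]
    have : QuadraticMap.polar (⇑Q) u0 v1 = p := rfl
    rw [this]
    linear_combination htp
  · intro b hb
    rw [QuadraticMap.polar_add_left, QuadraticMap.polar_smul_left, hv1perp b hb,
      hperp b hb]
    simp
  · rw [QuadraticMap.polar_add_right, QuadraticMap.polar_smul_right,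
      QuadraticMap.polar_self, hu0]
    simpa using hp

end Claims

section Wrapper

variable {X : Set (ℙ K V)} {ζ : Submodule K V} {Q : QuadraticForm K ↥ζ}

/-- A point of the quadric is collinear with a quadric point `mk a` whenever the polar
form vanishes. -/
lemma collinear_point_mk
    (hS : X ∩ projPts ζ = {p : ℙ K V | ∃ h : p.rep ∈ ζ, Q ⟨p.rep, h⟩ = 0})
    {p : ℙ K V} (hpζ : p.rep ∈ ζ) {a : ↥ζ} (ha : (a : V) ≠ 0)
    (hQp : Q ⟨p.rep, hpζ⟩ = 0) (hQa : Q a = 0)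
    (hpol : QuadraticMap.polar Q ⟨p.rep, hpζ⟩ a = 0)
    (hne : p ≠ Projectivization.mk K (a : V) ha) :
    XCollinear X p (Projectivization.mk K (a : V) ha) := by
  have hpeq : Projectivization.mk K (((⟨p.rep, hpζ⟩ : ↥ζ) : V))
      (Projectivization.rep_nonzero p) = p := Projectivization.mk_rep p
  have hne' : Projectivization.mk K (((⟨p.rep, hpζ⟩ : ↥ζ) : V)) (Projectivization.rep_nonzero p)
      ≠ Projectivization.mk K (a : V) ha := by
    rw [hpeq]; exact hne
  have hc := collinear_of_polar hS (a := (⟨p.rep, hpζ⟩ : ↥ζ)) (b := a)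
    (Projectivization.rep_nonzero p) ha hQp hQa hpol hne'
  rwa [hpeq] at hc

end Wrapper

end Aux


/-- Let `(X, Ξ)` be a pre-Mazzocca-Melone set of split type `d`.  Every singular
`k`-space with `k ≤ ⌊d/2⌋` which is contained in a finite-dimensional maximal
singular subspace is contained in a symp.  (A projective `k`-space has linear
dimension `k + 1`.) -/
theorem singular_space_in_symp {K : Type*} [Field K] {V : Type*} [AddCommGroup V]
    [Module K V] (d : ℕ) (hd : 1 ≤ d) (X : Set (ℙ K V)) (Xi : Set (Submodule K V))
    (h : IsPreMM d ⊤ X Xi) (k : ℕ) (hk : k ≤ d / 2)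
    (A : Submodule K V) (hA : Module.finrank K ↥A = k + 1) (hAX : IsSingular X A)
    (M : Submodule K V) (hAM : A ≤ M) (hMX : IsSingular X M)
    (hMfin : FiniteDimensional K ↥M)
    (hMmax : ∀ M' : Submodule K V, IsSingular X M' → M ≤ M' → M' = M) :
    ∃ ξ ∈ Xi, A ≤ ξ := by
  clear hMX hMmax hd
  induction k generalizing A with
  | zero =>
    -- a single point : use (MM1)
    haveI : FiniteDimensional K ↥A := FiniteDimensional.of_finrank_pos (by rw [hA]; norm_num)
    have b := Module.finBasisOfFinrankEq K ↥A hA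
    set v : V := ((b 0 : ↥A) : V) with hv
    have hv0 : v ≠ 0 := fun h0 => b.ne_zero 0 (Subtype.ext (by simpa [hv] using h0))
    set a := Projectivization.mk K v hv0 with hadef
    have haA : a.rep ∈ A := by
      obtain ⟨c, hc⟩ := exists_rep_smul (K := K) v hv0
      rw [hadef, hc]
      exact A.smul_mem _ (b 0).2
    have haX : a ∈ X := hAX haA
    obtain ⟨ξ, hξ, haξ, -⟩ := h.mm1 a haX a haX
    refine ⟨ξ, hξ, ?_⟩
    have hAv : A = Submodule.span K {v} := by
      symm
      apply Submodule.eq_of_le_of_finrank_eq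
      · rw [Submodule.span_le, Set.singleton_subset_iff]
        exact (b 0).2
      · rw [finrank_span_singleton hv0, hA]
    rw [hAv, Submodule.span_le, Set.singleton_subset_iff]
    obtain ⟨c, hc⟩ := exists_rep_smul (K := K) v hv0
    have h1 : ((c : K) • v) ∈ ξ := by rw [← hc]; exact haξ
    have h2 := ξ.smul_mem ((c : K)⁻¹) h1
    rwa [inv_smul_smul₀ (Units.ne_zero c)] at h2
  | succ j ih =>
    -- build a hyperplane B of A and a point q off B
    haveI : FiniteDimensional K ↥A := FiniteDimensional.of_finrank_pos (by rw [hA]; norm_num)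
    have b := Module.finBasisOfFinrankEq K ↥A hA
    set qhat : V := ((b (Fin.last (j + 1)) : ↥A) : V) with hqhat
    set Bf : Fin (j + 1) → V := fun i => ((b i.castSucc : ↥A) : V) with hBf
    set B : Submodule K V := Submodule.span K (Set.range Bf) with hB
    have hBA : B ≤ A := by
      rw [hB, Submodule.span_le]
      rintro w ⟨i, rfl⟩
      exact (b i.castSucc).2
    have hli : LinearIndependent K Bf := by
      have h1 : LinearIndependent K (fun i : Fin (j + 1) => b i.castSucc) :=
        b.linearIndependent.comp _ (Fin.castSucc_injective _)
      exact h1.map' A.subtype (Submodule.ker_subtype A)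
    have hBfr : Module.finrank K ↥B = j + 1 := by
      rw [hB, finrank_span_eq_card hli]
      simp
    have hBX : IsSingular X B := fun p hp => hAX (projPts_mono hBA hp)
    obtain ⟨ζ, hζXi, hBζ⟩ := ih (by omega) B hBfr hBX (le_trans hBA hAM)
    have hq0 : qhat ≠ 0 := fun h0 =>
      b.ne_zero (Fin.last (j + 1)) (Subtype.ext (by simpa [hqhat] using h0))
    have hqA : qhat ∈ A := (b (Fin.last (j + 1))).2
    have hAle : A ≤ B ⊔ Submodule.span K {qhat} := by
      have h1 : A = Submodule.map A.subtype ⊤ := (Submodule.map_subtype_top A).symm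
      rw [h1, ← b.span_eq, Submodule.map_span, Submodule.span_le]
      rintro w ⟨w', ⟨i, rfl⟩, rfl⟩
      rcases Fin.eq_castSucc_or_eq_last i with ⟨i', rfl⟩ | rfl
      · exact Submodule.mem_sup_left (Submodule.subset_span ⟨i', rfl⟩)
      · exact Submodule.mem_sup_right (Submodule.subset_span rfl)
    by_cases hqζ : qhat ∈ ζ
    · exact ⟨ζ, hζXi, le_trans hAle (sup_le hBζ
        (by rwa [Submodule.span_le, Set.singleton_subset_iff]))⟩
    -- the quadric of the symp ζ through B
    obtain ⟨Q, hnd, ⟨U, hUts, hUfr⟩, hS⟩ := h.xi_quadric ζ hζXi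
    have hζfr : Module.finrank K ↥ζ = d + 2 := h.xi_rank ζ hζXi
    haveI : FiniteDimensional K ↥ζ :=
      FiniteDimensional.of_finrank_pos (by rw [hζfr]; omega)
    set B' : Submodule K ↥ζ := Submodule.comap ζ.subtype B with hB'
    have hB'fr : Module.finrank K ↥B' = j + 1 := by
      rw [hB', LinearEquiv.finrank_eq (Submodule.comapSubtypeEquivOfLe hBζ) (R := K)]
      exact hBfr
    have hB'ts : ∀ w ∈ B', Q w = 0 := by
      intro w hw
      rcases eq_or_ne w 0 with rfl | hw0
      · exact map_zero Q
      have hwV : (w : V) ≠ 0 := fun h0 => hw0 (Subtype.ext (by simpa using h0))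
      obtain ⟨c, hc⟩ := exists_rep_smul (K := K) (w : V) hwV
      have hrepB : (Projectivization.mk K (w : V) hwV).rep ∈ B := by
        rw [hc]; exact B.smul_mem _ hw
      have hpX : Projectivization.mk K (w : V) hwV ∈ X := hBX hrepB
      have hpζ : (Projectivization.mk K (w : V) hwV).rep ∈ ζ := by
        rw [hc]; exact ζ.smul_mem _ w.2
      have hq := Q_of_mem hS hpX hpζ
      have he : (⟨(Projectivization.mk K (w : V) hwV).rep, hpζ⟩ : ↥ζ) = (c : K) • w := by
        apply Subtype.ext; simpa using hc
      rw [he, QuadraticMap.map_smul, smul_eq_mul] at hq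
      rcases mul_eq_zero.mp hq with h0 | h0
      · exact absurd h0 (mul_ne_zero c.ne_zero c.ne_zero)
      · exact h0
    -- the point q
    set q := Projectivization.mk K qhat hq0 with hqdef
    obtain ⟨cq, hcq⟩ := exists_rep_smul (K := K) qhat hq0
    have hqrepA : q.rep ∈ A := by rw [hqdef, hcq]; exact A.smul_mem _ hqA
    have hqX : q ∈ X := hAX hqrepA
    have hqrepζ : q.rep ∉ ζ := by
      intro hmem
      apply hqζ
      rw [hqdef, hcq] at hmem
      have h2 := ζ.smul_mem ((cq : K)⁻¹) hmem
      rwa [inv_smul_smul₀ (Units.ne_zero cq)] at h2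
    -- each point of B is collinear with q
    have hbq : ∀ p ∈ projPts B, XCollinear X p q ∧ p ≠ q := by
      intro p hp
      have hpB : p.rep ∈ B := hp
      have hpζ : p.rep ∈ ζ := hBζ hpB
      have hpq : p ≠ q := fun he => hqrepζ (he ▸ hpζ)
      refine ⟨⟨hAX (hBA hpB), hqX, Submodule.span K {p.rep, q.rep},
        ⟨finrank_span_pair (pair_indep hpq), ?_⟩,
        Submodule.subset_span (Set.mem_insert _ _),
        Submodule.subset_span (Set.mem_insert_of_mem _ rfl)⟩, hpq⟩
      intro w hw
      apply hAX
      apply projPts_mono _ hw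
      rw [Submodule.span_le]
      rintro v (rfl | rfl)
      · exact hBA hpB
      · exact hqrepA
    -- find a singular vector u0 perpendicular to B' but not in B'
    have hUlt : Module.finrank K ↥B' < Module.finrank K ↥U := by
      rw [hB'fr, hUfr, hζfr]
      omega
    obtain ⟨u0, hQu0, hu0perp, hu0B⟩ := exists_singular_perp Q U B' hUts hB'ts hUlt
    have hu0V : (u0 : V) ≠ 0 := by
      intro h0
      exact hu0B (by
        have : u0 = 0 := Subtype.ext (by simpa using h0)
        rw [this]; exact B'.zero_mem)
    -- main continuation: a quadric point of ζ perpendicular to B', non-collinear with q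
    have key : ∀ (a : ↥ζ) (ha0 : (a : V) ≠ 0), Q a = 0 →
        (∀ bb ∈ B', QuadraticMap.polar Q a bb = 0) → a ∉ B' →
        ¬ XCollinear X (Projectivization.mk K (a : V) ha0) q → ∃ ξ ∈ Xi, A ≤ ξ := by
      intro a ha0 hQa haperp haB hnc
      set xa := Projectivization.mk K (a : V) ha0 with hxadef
      have hxaX : xa ∈ X := mem_X_of_Q hS ha0 hQa
      obtain ⟨ca, hca⟩ := exists_rep_smul (K := K) (a : V) ha0
      have hxaζ : xa.rep ∈ ζ := by rw [hxadef, hca]; exact ζ.smul_mem _ a.2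
      have hxaq : xa ≠ q := fun he => hqrepζ (he ▸ hxaζ)
      obtain ⟨ξ, hξXi, hxaξ, hqξ⟩ := h.mm1 xa hxaX q hqX
      have hBpts : ∀ p ∈ projPts B, p.rep ∈ ξ := by
        intro p hp
        obtain ⟨hpcolq, hpq⟩ := hbq p hp
        have hpB : p.rep ∈ B := hp
        have hpζ : p.rep ∈ ζ := hBζ hpB
        have hpB' : (⟨p.rep, hpζ⟩ : ↥ζ) ∈ B' := hpB
        have hQp : Q ⟨p.rep, hpζ⟩ = 0 := hB'ts _ hpB'
        have hpolpa : QuadraticMap.polar Q ⟨p.rep, hpζ⟩ a = 0 := by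
          rw [QuadraticMap.polar_comm]
          exact haperp _ hpB'
        have hpxa : p ≠ xa := by
          intro he
          apply haB
          have h3 : xa.rep ∈ B := he ▸ hpB
          rw [hxadef, hca] at h3
          have h4 := B.smul_mem ((ca : K)⁻¹) h3
          rw [inv_smul_smul₀ (Units.ne_zero ca)] at h4
          exact h4
        have hcolpxa : XCollinear X p xa :=
          collinear_point_mk hS hpζ ha0 hQp hQa hpolpa (hxadef ▸ hpxa)
        exact lemB h hnc hxaq hcolpxa hpcolq hpxa hpq hξXi hxaξ hqξ
      refine ⟨ξ, hξXi, ?_⟩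
      have hBξ : B ≤ ξ := le_of_points hBpts
      have hqhatξ : qhat ∈ ξ := by
        have h1 : (cq : K) • qhat ∈ ξ := by rw [← hcq]; exact hqξ
        have h2 := ξ.smul_mem ((cq : K)⁻¹) h1
        rwa [inv_smul_smul₀ (Units.ne_zero cq)] at h2
      exact le_trans hAle (sup_le hBξ
        (by rwa [Submodule.span_le, Set.singleton_subset_iff]))
    by_cases h1 : XCollinear X (Projectivization.mk K (u0 : V) hu0V) q
    · -- need a second quadric point
      obtain ⟨v2, hQv2, hv2perp, hpol12⟩ :=
        exists_polar_partner Q hnd B' hB'ts u0 hQu0 hu0perp hu0B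
      have hv2B : v2 ∉ B' := fun hmem => hpol12 (hu0perp v2 hmem)
      have hv2V : (v2 : V) ≠ 0 := by
        intro h0
        exact hv2B (by
          have : v2 = 0 := Subtype.ext (by simpa using h0)
          rw [this]; exact B'.zero_mem)
      by_cases h2 : XCollinear X (Projectivization.mk K (v2 : V) hv2V) q
      · -- q is collinear with both x1 and x2 : use the symp through x1 and x2
        obtain ⟨hnc12, hne12⟩ := not_collinear_of_polar hS hu0V hv2V hQu0 hQv2 hpol12
        set x1 := Projectivization.mk K (u0 : V) hu0V with hx1def
        set x2 := Projectivization.mk K (v2 : V) hv2V with hx2def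
        have hx1X : x1 ∈ X := mem_X_of_Q hS hu0V hQu0
        have hx2X : x2 ∈ X := mem_X_of_Q hS hv2V hQv2
        obtain ⟨c1, hc1⟩ := exists_rep_smul (K := K) (u0 : V) hu0V
        obtain ⟨c2, hc2⟩ := exists_rep_smul (K := K) (v2 : V) hv2V
        have hx1ζ : x1.rep ∈ ζ := by rw [hx1def, hc1]; exact ζ.smul_mem _ u0.2
        have hx2ζ : x2.rep ∈ ζ := by rw [hx2def, hc2]; exact ζ.smul_mem _ v2.2
        have hqx1 : q ≠ x1 := fun he => hqrepζ (he ▸ hx1ζ)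
        have hqx2 : q ≠ x2 := fun he => hqrepζ (he ▸ hx2ζ)
        obtain ⟨ξ, hξXi, hx1ξ, hx2ξ⟩ := h.mm1 x1 hx1X x2 hx2X
        have hqrepξ : q.rep ∈ ξ :=
          lemB h hnc12 hne12 (XCollinear_comm h1) (XCollinear_comm h2) hqx1 hqx2
            hξXi hx1ξ hx2ξ
        have hBpts : ∀ p ∈ projPts B, p.rep ∈ ξ := by
          intro p hp
          have hpB : p.rep ∈ B := hp
          have hpζ : p.rep ∈ ζ := hBζ hpB
          have hpB' : (⟨p.rep, hpζ⟩ : ↥ζ) ∈ B' := hpB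
          have hQp : Q ⟨p.rep, hpζ⟩ = 0 := hB'ts _ hpB'
          have hpx1 : p ≠ x1 := by
            intro he
            apply hu0B
            have h3 : x1.rep ∈ B := he ▸ hpB
            rw [hx1def, hc1] at h3
            have h4 := B.smul_mem ((c1 : K)⁻¹) h3
            rw [inv_smul_smul₀ (Units.ne_zero c1)] at h4
            exact h4
          have hpx2 : p ≠ x2 := by
            intro he
            apply hv2B
            have h3 : x2.rep ∈ B := he ▸ hpB
            rw [hx2def, hc2] at h3
            have h4 := B.smul_mem ((c2 : K)⁻¹) h3
            rw [inv_smul_smul₀ (Units.ne_zero c2)] at h4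
            exact h4
          have hcol1 : XCollinear X p x1 :=
            collinear_point_mk hS hpζ hu0V hQp hQu0
              (by rw [QuadraticMap.polar_comm]; exact hu0perp _ hpB') (hx1def ▸ hpx1)
          have hcol2 : XCollinear X p x2 :=
            collinear_point_mk hS hpζ hv2V hQp hQv2
              (by rw [QuadraticMap.polar_comm]; exact hv2perp _ hpB') (hx2def ▸ hpx2)
          exact lemB h hnc12 hne12 hcol1 hcol2 hpx1 hpx2 hξXi hx1ξ hx2ξ
        refine ⟨ξ, hξXi, ?_⟩
        have hBξ : B ≤ ξ := le_of_points hBpts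
        have hqhatξ : qhat ∈ ξ := by
          have h3 : (cq : K) • qhat ∈ ξ := by rw [← hcq]; exact hqrepξ
          have h4 := ξ.smul_mem ((cq : K)⁻¹) h3
          rwa [inv_smul_smul₀ (Units.ne_zero cq)] at h4
        exact le_trans hAle (sup_le hBξ
          (by rwa [Submodule.span_le, Set.singleton_subset_iff]))
      · exact key v2 hv2V hQv2 hv2perp hv2B h2
    · exact key u0 hu0V hQu0 hu0perp hu0B h1

end MMset
end

section
/- Let H be a hyperbolic quadric in P^{2n+1}(K), n ≥ 1. Then every (n+1)-dimensional projective subspace of P^{2n+1}(K) contains a pair of non-collinear points of H, i.e., two points of H whose joining line is not contained in H. -/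
/-!
Formalization of definitions from "On the varieties of the second row of the
split Freudenthal-Tits Magic Square" by Schillewaert and Van Maldeghem.

Points of the projective space `P(V)` are elements of `ℙ K V`; projective
subspaces are represented by linear subspaces (`Submodule K V`), so a projective
`k`-space corresponds to a submodule of linear dimension `k + 1`.
-/

open scoped LinearAlgebra.Projectivization
open Projectivization Module

namespace MMset

open scoped LinearAlgebra.Projectivization


/-!
Let `B` be the polar form of the hyperbolic form `Q` on `K^{2n+2}` and `S` a subspace of
dimension `n + 2`. If some singular `p ∈ S` has `B(p, s) ≠ 0` for an `s ∈ S`, then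
`q = s - (Q s / B(p, s)) p` is singular with `B(p, q) ≠ 0`, so `Q (p + q) ≠ 0` and the line `pq`
leaves the quadric. Otherwise the singular vectors of `S` span a totally singular `T` with
`S ⊆ T^⊥`. Every totally singular subspace extends to one, `W`, of dimension at least `n + 1`
(the Witt index); then `S ∩ W ⊆ T` and `S + W ⊆ T^⊥`, whence
`dim S + dim W ≤ dim T + dim T^⊥ = 2n + 2`, a contradiction.
-/

open QuadraticMap LinearMap.BilinForm

section TotallySingular

variable {K V : Type*} [Field K] [AddCommGroup V] [Module K V]

def IsTotallySingular (Q : QuadraticForm K V) (W : Submodule K V) : Prop :=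
  ∀ x ∈ W, Q x = 0

variable {Q : QuadraticForm K V}

lemma polarBilin_isRefl (Q : QuadraticForm K V) : (polarBilin Q).IsRefl := fun x y h => by
  rwa [polarBilin_apply_apply, polar_comm, ← polarBilin_apply_apply]

lemma le_orthogonal_comm {N L : Submodule K V} (h : N ≤ orthogonal (polarBilin Q) L) :
    L ≤ orthogonal (polarBilin Q) N :=
  fun _ hl _ hn => polarBilin_isRefl Q _ _ (h hn _ hl)

lemma IsTotallySingular.mono {W W' : Submodule K V} (hW : IsTotallySingular Q W) (h : W' ≤ W) :
    IsTotallySingular Q W' :=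
  fun x hx => hW x (h hx)

lemma IsTotallySingular.le_orthogonal {W : Submodule K V} (hW : IsTotallySingular Q W) :
    W ≤ orthogonal (polarBilin Q) W := fun x hx y hy => by
  simp [polar, hW x hx, hW y hy, hW _ (W.add_mem hy hx)]

lemma IsTotallySingular.sup {U T : Submodule K V} (hU : IsTotallySingular Q U)
    (hT : IsTotallySingular Q T) (hUT : T ≤ orthogonal (polarBilin Q) U) :
    IsTotallySingular Q (U ⊔ T) := by
  intro x hx
  obtain ⟨u, hu, t, ht, rfl⟩ := Submodule.mem_sup.mp hx
  rw [QuadraticMap.map_add (⇑Q), hU u hu, hT t ht, ← polarBilin_apply_apply, hUT ht u hu, add_zero,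
    add_zero]

lemma finrank_le_finrank_inf_orthogonal_add [FiniteDimensional K V] {B : LinearMap.BilinForm K V}
    (hB : B.IsRefl) (U N : Submodule K V) :
    finrank K U ≤ finrank K ↥(U ⊓ B.orthogonal N) + finrank K N := by
  have h₁ := Submodule.finrank_sup_add_finrank_inf_eq U (B.orthogonal N)
  have h₂ := Submodule.finrank_le (U ⊔ B.orthogonal N)
  have h₃ := finrank_add_finrank_orthogonal hB N
  have h₄ := Submodule.finrank_le (N ⊓ B.orthogonal ⊤)
  omega

variable [FiniteDimensional K V]

lemma IsTotallySingular.exists_le_finrank_le {U T : Submodule K V} (hU : IsTotallySingular Q U)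
    (hT : IsTotallySingular Q T) :
    ∃ W, T ≤ W ∧ IsTotallySingular Q W ∧ finrank K U ≤ finrank K W := by
  -- `T'` complements `T ⊓ U` in `T`; the part of `U` orthogonal to `T'` is orthogonal to all of `T`
  obtain ⟨C, hC⟩ := (T ⊓ U).exists_isCompl
  set T' := C ⊓ T
  set A := U ⊓ orthogonal (polarBilin Q) T'
  have hT_le : T ≤ (T ⊓ U) ⊔ T' := by
    rw [← sup_inf_assoc_of_le C inf_le_left, hC.sup_eq_top, top_inf_eq]
  have hTA : T ≤ orthogonal (polarBilin Q) A :=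
    hT_le.trans <| sup_le (inf_le_right.trans <| hU.le_orthogonal.trans <| orthogonal_le inf_le_left)
      (le_orthogonal_comm inf_le_right)
  refine ⟨A ⊔ T, le_sup_right, (hU.mono inf_le_left).sup hT hTA, ?_⟩
  have hA : finrank K U ≤ finrank K A + finrank K T' :=
    finrank_le_finrank_inf_orthogonal_add (polarBilin_isRefl Q) U T'
  have hT'_sum := Submodule.finrank_sup_add_finrank_inf_eq (T ⊓ U) T'
  have hT'_inf : (T ⊓ U) ⊓ T' = ⊥ := by
    rw [← le_bot_iff, ← hC.inf_eq_bot]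
    exact inf_le_inf_left _ inf_le_left
  have hT'_sup := Submodule.finrank_mono (sup_le inf_le_left inf_le_right : T ⊓ U ⊔ T' ≤ T)
  have hAT := Submodule.finrank_sup_add_finrank_inf_eq A T
  have hAT_le : finrank K ↥(A ⊓ T) ≤ finrank K ↥(T ⊓ U) :=
    Submodule.finrank_mono fun x hx => ⟨hx.2, hx.1.1⟩
  rw [hT'_inf, finrank_bot] at hT'_sum
  omega

lemma finrank_add_finrank_le_of_forall_singular_polar_eq_zero (hQ : (polarBilin Q).Nondegenerate)
    {U : Submodule K V} (hU : IsTotallySingular Q U) (S : Submodule K V)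
    (hS : ∀ p ∈ S, Q p = 0 → ∀ s ∈ S, polar Q p s = 0) :
    finrank K S + finrank K U ≤ finrank K V := by
  set T := Submodule.span K {x | x ∈ S ∧ Q x = 0}
  have hTS : T ≤ S := Submodule.span_le.2 fun x hx => hx.1
  have hST : S ≤ orthogonal (polarBilin Q) T :=
    le_orthogonal_comm <| Submodule.span_le.2 fun x hx s hs => by
      rw [polarBilin_apply_apply, polar_comm]
      exact hS x hx.1 hx.2 s hs
  have hT : IsTotallySingular Q T := fun x hx => by
    induction hx using Submodule.span_induction with
    | mem x hx => exact hx.2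
    | zero => exact map_zero Q
    | add x y hx hy hQx hQy =>
      rw [QuadraticMap.map_add (⇑Q), hQx, hQy, ← polarBilin_apply_apply, hST (hTS hy) x hx]
      simp
    | smul c x _ hQx => rw [QuadraticMap.map_smul, hQx, smul_zero]
  obtain ⟨W, hTW, hW, hUW⟩ := hU.exists_le_finrank_le hT
  have h_inf : finrank K ↥(S ⊓ W) ≤ finrank K T :=
    Submodule.finrank_mono fun x hx => Submodule.subset_span ⟨hx.1, hW x hx.2⟩
  have h_sup : finrank K ↥(S ⊔ W) ≤ finrank K ↥(orthogonal (polarBilin Q) T) :=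
    Submodule.finrank_mono <| sup_le hST (hW.le_orthogonal.trans (orthogonal_le hTW))
  have h_orth := finrank_orthogonal hQ T
  have h_le := Submodule.finrank_le T
  have h_sum := Submodule.finrank_sup_add_finrank_inf_eq S W
  omega

lemma exists_singular_polar_ne_zero (hQ : (polarBilin Q).Nondegenerate) {U : Submodule K V}
    (hU : IsTotallySingular Q U) {S : Submodule K V}
    (hSU : finrank K V < finrank K S + finrank K U) :
    ∃ p ∈ S, Q p = 0 ∧ ∃ q ∈ S, Q q = 0 ∧ polar Q p q ≠ 0 := by
  obtain ⟨p, hpS, hp, s, hsS, hps⟩ : ∃ p ∈ S, Q p = 0 ∧ ∃ s ∈ S, polar Q p s ≠ 0 := by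
    by_contra! h
    exact hSU.not_ge (finrank_add_finrank_le_of_forall_singular_polar_eq_zero hQ hU S h)
  have hpq : polar Q p (s - (Q s / polar Q p s) • p) = polar Q p s := by
    rw [polar_sub_right, polar_smul_right, polar_self, hp]
    simp
  refine ⟨p, hpS, hp, _, S.sub_mem hsS (S.smul_mem _ hpS), ?_, hpq ▸ hps⟩
  rw [sub_eq_add_neg, QuadraticMap.map_add (⇑Q), ← neg_smul, QuadraticMap.map_smul, hp,
    polar_smul_right, polar_comm _ s p, smul_zero, add_zero, smul_eq_mul, neg_mul,
    div_mul_cancel₀ _ hps, add_neg_cancel]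

end TotallySingular

section Projective

variable {K V : Type*} [Field K] [AddCommGroup V] [Module K V]

lemma rep_mk_mem_iff {W : Submodule K V} {v : V} (hv : v ≠ 0) :
    (mk K v hv).rep ∈ W ↔ v ∈ W := by
  rw [← Submodule.span_singleton_le_iff_mem, ← submodule_eq, submodule_mk,
    Submodule.span_singleton_le_iff_mem]

lemma rep_mk_eq_zero_iff (Q : QuadraticForm K V) {v : V} (hv : v ≠ 0) :
    Q (mk K v hv).rep = 0 ↔ Q v = 0 := by
  obtain ⟨a, ha⟩ := exists_smul_eq_mk_rep K v hv
  rw [← ha, Units.smul_def, QuadraticMap.map_smul, smul_eq_mul, mul_eq_zero, mul_self_eq_zero,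
    or_iff_right a.ne_zero]

def quadric (Q : QuadraticForm K V) : Set (ℙ K V) := {x | Q x.rep = 0}

lemma exists_noncollinear_pair_of_polar_ne_zero (Q : QuadraticForm K V) {S : Submodule K V}
    {p q : V} (hpS : p ∈ S) (hqS : q ∈ S) (hp : Q p = 0) (hq : Q q = 0)
    (hpq : polar Q p q ≠ 0) :
    ∃ x ∈ quadric Q, ∃ y ∈ quadric Q, x.rep ∈ S ∧ y.rep ∈ S ∧
      ¬ projPts (Submodule.span K {x.rep, y.rep}) ⊆ quadric Q := by
  have hp₀ : p ≠ 0 := by rintro rfl; exact hpq (polar_zero_left Q q)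
  have hq₀ : q ≠ 0 := by rintro rfl; exact hpq (polar_zero_right Q p)
  have hQpq : Q (p + q) = polar Q p q := by
    rw [QuadraticMap.map_add (⇑Q), hp, hq, zero_add, zero_add]
  have hpq₀ : p + q ≠ 0 := fun h => hpq (by rw [← hQpq, h, map_zero])
  refine ⟨mk K p hp₀, (rep_mk_eq_zero_iff Q hp₀).2 hp, mk K q hq₀, (rep_mk_eq_zero_iff Q hq₀).2 hq,
    (rep_mk_mem_iff hp₀).2 hpS, (rep_mk_mem_iff hq₀).2 hqS, fun hline => ?_⟩
  refine hpq (hQpq ▸ (rep_mk_eq_zero_iff Q hpq₀).1 (hline ?_))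
  exact (rep_mk_mem_iff hpq₀).2 <| add_mem
    ((rep_mk_mem_iff hp₀).1 (Submodule.subset_span (by simp)))
    ((rep_mk_mem_iff hq₀).1 (Submodule.subset_span (by simp)))

end Projective

section Hyperbolic

variable (K : Type*) [Field K] (m : ℕ)

def hypBilinForm : LinearMap.BilinForm K (Fin (2 * m) → K) :=
  ∑ i : Fin m, (LinearMap.mul K K).compl₁₂ (LinearMap.proj ⟨2 * i, by omega⟩)
    (LinearMap.proj ⟨2 * i + 1, by omega⟩)

def hypQuadraticForm : QuadraticForm K (Fin (2 * m) → K) :=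
  (hypBilinForm K m).toQuadraticMap

def evenCoordSubspace : Submodule K (Fin (2 * m) → K) :=
  LinearMap.ker (LinearMap.funLeft K K fun i : Fin m => (⟨2 * i + 1, by omega⟩ : Fin (2 * m)))

variable {K m}

lemma hypBilinForm_apply (x y : Fin (2 * m) → K) :
    hypBilinForm K m x y = ∑ i : Fin m, x ⟨2 * i, by omega⟩ * y ⟨2 * i + 1, by omega⟩ := by
  simp [hypBilinForm]

lemma hypQuadraticForm_apply (x : Fin (2 * m) → K) : hypQuadraticForm K m x = hypForm K m x :=
  hypBilinForm_apply x x

lemma polar_hypQuadraticForm_single_odd (x : Fin (2 * m) → K) (i : Fin m) :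
    polar (hypQuadraticForm K m) x (Pi.single ⟨2 * i + 1, by omega⟩ 1) = x ⟨2 * i, by omega⟩ := by
  rw [hypQuadraticForm, LinearMap.BilinMap.polar_toQuadraticMap, hypBilinForm_apply,
    hypBilinForm_apply]
  simp [Pi.single_apply, Fin.mk.injEq, Fin.val_inj, Nat.two_mul_ne_two_mul_add_one]

lemma polar_hypQuadraticForm_single_even (x : Fin (2 * m) → K) (i : Fin m) :
    polar (hypQuadraticForm K m) x (Pi.single ⟨2 * i, by omega⟩ 1) = x ⟨2 * i + 1, by omega⟩ := by
  rw [hypQuadraticForm, LinearMap.BilinMap.polar_toQuadraticMap, hypBilinForm_apply,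
    hypBilinForm_apply]
  simp [Pi.single_apply, Fin.mk.injEq, Fin.val_inj, Nat.two_mul_ne_two_mul_add_one.symm]

lemma polarBilin_hypQuadraticForm_nondegenerate :
    (polarBilin (hypQuadraticForm K m)).Nondegenerate := by
  refine (polarBilin_isRefl _).nondegenerate_iff_separatingLeft.2 fun x hx => funext fun j => ?_
  obtain ⟨i, rfl | rfl⟩ : ∃ i : Fin m, j = ⟨2 * i, by omega⟩ ∨ j = ⟨2 * i + 1, by omega⟩ :=
    ⟨⟨j / 2, by omega⟩, by
      rcases Nat.mod_two_eq_zero_or_one j with h | h <;> simp [Fin.ext_iff] <;> omega⟩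
  · simpa [polar_hypQuadraticForm_single_odd] using hx (Pi.single ⟨2 * i + 1, by omega⟩ 1)
  · simpa [polar_hypQuadraticForm_single_even] using hx (Pi.single ⟨2 * i, by omega⟩ 1)

lemma isTotallySingular_evenCoordSubspace :
    IsTotallySingular (hypQuadraticForm K m) (evenCoordSubspace K m) := fun x hx => by
  rw [hypQuadraticForm_apply, hypForm]
  exact Finset.sum_eq_zero fun i _ => mul_eq_zero_of_right _ (congr_fun hx i)

lemma finrank_evenCoordSubspace : finrank K (evenCoordSubspace K m) = m := by
  set f := LinearMap.funLeft K K fun i : Fin m => (⟨2 * i + 1, by omega⟩ : Fin (2 * m))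
  have h_surj : Function.Surjective f :=
    LinearMap.funLeft_surjective_of_injective K K _ fun i j h => Fin.ext (by simpa using h)
  have h := f.finrank_range_add_finrank_ker
  rw [LinearMap.range_eq_top.2 h_surj, finrank_top, finrank_fin_fun, finrank_fin_fun] at h
  change finrank K (LinearMap.ker f) = m
  omega

lemma hypQuadric_eq_quadric : hypQuadric K m = quadric (hypQuadraticForm K m) := by
  simp only [hypQuadric, quadric, hypQuadraticForm_apply]

end Hyperbolic

theorem hyperbolic_noncollinear_pair_general {K : Type*} [Field K] (n : ℕ)
    (S : Submodule K (Fin (2 * (n + 1)) → K)) (hS : Module.finrank K ↥S = n + 2) :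
    ∃ p ∈ hypQuadric K (n + 1), ∃ q ∈ hypQuadric K (n + 1),
      p.rep ∈ S ∧ q.rep ∈ S ∧
      ¬ (projPts (Submodule.span K {p.rep, q.rep}) ⊆ hypQuadric K (n + 1)) := by
  obtain ⟨p, hpS, hp, q, hqS, hq, hpq⟩ := exists_singular_polar_ne_zero
    polarBilin_hypQuadraticForm_nondegenerate isTotallySingular_evenCoordSubspace
    (S := S) (by rw [finrank_evenCoordSubspace, finrank_fin_fun, hS]; omega)
  rw [hypQuadric_eq_quadric]
  exact exists_noncollinear_pair_of_polar_ne_zero _ hpS hqS hp hq hpq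

/-- Let `H` be a hyperbolic quadric in `ℙ^{2n+1}(K)`, `n ≥ 1`.  Then every
`(n+1)`-dimensional projective subspace of `ℙ^{2n+1}(K)` (of linear dimension
`n + 2`) contains a pair of non-collinear points of `H`, i.e. two points of `H`
whose joining line is not contained in `H`. -/
theorem hyperbolic_noncollinear_pair {K : Type*} [Field K] (n : ℕ) (hn : 1 ≤ n)
    (S : Submodule K (Fin (2 * (n + 1)) → K)) (hS : Module.finrank K ↥S = n + 2) :
    ∃ p ∈ hypQuadric K (n + 1), ∃ q ∈ hypQuadric K (n + 1),
      p.rep ∈ S ∧ q.rep ∈ S ∧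
      ¬ (projPts (Submodule.span K {p.rep, q.rep}) ⊆ hypQuadric K (n + 1)) :=
  hyperbolic_noncollinear_pair_general n S hS

end MMset
end
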